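/- arXiv:1210.3189 — 5 statements merged into one kernel-verified Lean document; each statement's English description precedes it below -/
import Mathlib

section
/- Let A be a commutative ring, B a finite A-algebra equipped with an action of a finite group G by A-algebra automorphisms such that A ⊆ B^G. Let I be an ideal of A and J = IB. Then G acts continuously for the J-adic topology, inducing an action on the J-adic completion of B, and under the canonical identification of the completion of B with B ⊗_A Â (where Â is the I-adic completion of A), the ring of G-invariants of the completion equals B^G ⊗_A Â. -/
/-!
`B^G` is the kernel of `b ↦ (g • b - b)_g : B → ∏_G B`. Tensoring with `Â` keeps this sequence
exact because `Â` is flat over the noetherian ring `A`, and commutes with the finite product, so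
`B^G ⊗ Â` is the common kernel of the maps `(g - 1) ⊗ id` on `B ⊗ Â`.
-/

open scoped TensorProduct

def fixedSubalgebra {A B : Type*} [CommRing A] [CommRing B] [Algebra A B]
    (G : Type*) [Group G] (ρ : G →* (B ≃ₐ[A] B)) : Subalgebra A B where
  carrier := {b | ∀ g : G, ρ g b = b}
  mul_mem' hx hy := fun g => by simp [map_mul, hx g, hy g]
  add_mem' hx hy := fun g => by simp [map_add, hx g, hy g]
  algebraMap_mem' a := fun g => (ρ g).commutes a

open LinearMap

theorem LinearMap.rTensor_pi_eq_zero_iff {R ι N M : Type*} {P : ι → Type*} [CommSemiring R]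
    [Finite ι] [AddCommMonoid N] [Module R N] [AddCommMonoid M] [Module R M]
    [∀ i, AddCommMonoid (P i)] [∀ i, Module R (P i)] (f : ∀ i, N →ₗ[R] P i) (x : N ⊗[R] M) :
    (pi f).rTensor M x = 0 ↔ ∀ i, (f i).rTensor M x = 0 := by
  classical
  cases nonempty_fintype ι
  have h : TensorProduct.piLeft R M P ((pi f).rTensor M x) = fun i ↦ (f i).rTensor M x := by
    induction x using TensorProduct.induction_on with
    | zero => ext; simp
    | tmul n m => ext i; simp
    | add x y hx hy => simp only [map_add, hx, hy]; rfl
  rw [← (TensorProduct.piLeft R M P).map_eq_zero_iff, h, funext_iff]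
  rfl

theorem Module.Flat.mem_range_rTensor_iff_forall {R ι K N M : Type*} {P : ι → Type*} [CommRing R]
    [Finite ι] [AddCommGroup K] [Module R K] [AddCommGroup N] [Module R N]
    [AddCommGroup M] [Module R M] [Module.Flat R M]
    [∀ i, AddCommGroup (P i)] [∀ i, Module R (P i)] {j : K →ₗ[R] N} {f : ∀ i, N →ₗ[R] P i}
    (h : Function.Exact j (pi f)) (x : N ⊗[R] M) :
    x ∈ range (j.rTensor M) ↔ ∀ i, (f i).rTensor M x = 0 := by
  rw [← rTensor_pi_eq_zero_iff]
  exact (Module.Flat.rTensor_exact M h x).symm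

theorem exact_val_fixedSubalgebra {A B : Type*} [CommRing A] [CommRing B] [Algebra A B]
    (G : Type*) [Group G] (ρ : G →* (B ≃ₐ[A] B)) :
    Function.Exact (fixedSubalgebra G ρ).val.toLinearMap
      (pi fun g ↦ (ρ g).toLinearMap - LinearMap.id) := by
  intro b
  simp only [funext_iff, pi_apply, LinearMap.sub_apply, Pi.zero_apply, sub_eq_zero]
  exact ⟨fun hb ↦ ⟨⟨b, hb⟩, rfl⟩, by rintro ⟨b, rfl⟩; exact b.2⟩

theorem statement1_general {A B : Type*} [CommRing A] [IsNoetherianRing A]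
    [CommRing B] [Algebra A B]
    (G : Type*) [Group G] [Finite G] (ρ : G →* (B ≃ₐ[A] B))
    (I : Ideal A) (x : B ⊗[A] AdicCompletion I A) :
    (∀ g : G, Algebra.TensorProduct.map (ρ g).toAlgHom
        (AlgHom.id A (AdicCompletion I A)) x = x) ↔
      x ∈ (Algebra.TensorProduct.map (fixedSubalgebra G ρ).val
        (AlgHom.id A (AdicCompletion I A))).range := by
  have : Module.Flat A (AdicCompletion I A) := AdicCompletion.flat_of_isNoetherian I
  -- `Algebra.TensorProduct.map f (AlgHom.id _ _)` is definitionally `f.toLinearMap.rTensor _`.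
  change _ ↔ x ∈ range ((fixedSubalgebra G ρ).val.toLinearMap.rTensor _)
  rw [Module.Flat.mem_range_rTensor_iff_forall (exact_val_fixedSubalgebra G ρ)]
  simp only [rTensor_sub, rTensor_id, LinearMap.sub_apply, id_apply, sub_eq_zero]
  rfl

/-- Let `A` be a noetherian commutative ring, `B` a finite `A`-algebra,
`G` a finite group acting on `B` by `A`-algebra automorphisms (so `A ⊆ B^G`), `I` an
ideal of `A` and `Â` the `I`-adic completion of `A`.  Under the canonical identification
of the `J`-adic completion of `B` (`J = IB`) with `B ⊗[A] Â` coming from finiteness of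
`B` over `A`, the ring of `G`-invariants of the completion — i.e. the invariants of the
action `g ⊗ id` on `B ⊗[A] Â` — equals `B^G ⊗[A] Â`, i.e. the image of the canonical map
`(B^G) ⊗[A] Â → B ⊗[A] Â`. -/
theorem statement1 {A B : Type*} [CommRing A] [IsNoetherianRing A]
    [CommRing B] [Algebra A B] [Module.Finite A B] [IsNoetherianRing B]
    (G : Type*) [Group G] [Finite G] (ρ : G →* (B ≃ₐ[A] B))
    (I : Ideal A) (x : B ⊗[A] AdicCompletion I A) :
    (∀ g : G, Algebra.TensorProduct.map (ρ g).toAlgHom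
        (AlgHom.id A (AdicCompletion I A)) x = x) ↔
      x ∈ (Algebra.TensorProduct.map (fixedSubalgebra G ρ).val
        (AlgHom.id A (AdicCompletion I A))).range :=
  statement1_general G ρ I x
end

section
/- Let K be a field of characteristic zero and L a purely transcendental extension of K. Let N₁, N₂ be finite-dimensional K(x)-vector spaces with K-linear connections (i.e. differential modules over K(x)). If N₁ ⊗_{K(x)} L(x) and N₂ ⊗_{K(x)} L(x) are isomorphic as differential modules over L(x), then N₁ and N₂ are isomorphic over K(x). -/
/-!
In bases, a differential module over `K(x)` is a connection matrix `A`, and a horizontal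
isomorphism is an invertible matrix `N` solving the gauge equation `N' = N A₁ - A₂ N`. The
isomorphism over `L(x)` gives such a matrix `M` over `L(x) = Frac K[s, x]`, where `s` is a
transcendence basis with `L = K(s)`. Clearing a common denominator `w`, the matrix `w M`, the
matrices `w Aᵢ` and the gauge equation all live in the polynomial ring `K[s, x]`. Since `K` is
infinite, `s` can be specialised to a point `c` of `K^s` at which `w · det (w M)` does not vanish,
and `w(c)⁻¹ (w M)(c)` is then an invertible solution of the gauge equation over `K(x)`.
-/

open Module Matrix MvPolynomial

namespace Module.Basis

section Leibniz

variable {R F : Type*} [CommRing R] [CommRing F] [Algebra R F] {δ : Derivation R F F}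
  {V : Type*} [AddCommGroup V] [Module F V] {ι : Type*} [Fintype ι]

noncomputable def connectionMatrix (b : Basis ι F V) (D : V →+ V) : Matrix ι ι F :=
  fun i j => b.repr (D (b j)) i

theorem repr_apply_of_leibniz (b : Basis ι F V) {D : V →+ V}
    (hD : ∀ (f : F) (v : V), D (f • v) = δ f • v + f • D v) (v : V) (i : ι) :
    b.repr (D v) i = δ (b.repr v i) + (b.connectionMatrix D *ᵥ ⇑(b.repr v)) i := by
  obtain ⟨c, rfl⟩ : ∃ c : ι → F, v = ∑ k, c k • b k := ⟨_, (b.sum_repr v).symm⟩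
  have hDv : D (∑ k, c k • b k) = ∑ k, δ (c k) • b k + ∑ k, c k • D (b k) := by
    simp only [map_sum, hD, Finset.sum_add_distrib]
  rw [hDv, map_add, Finsupp.add_apply, b.repr_sum_self, b.repr_sum_self]
  simp [mulVec, dotProduct, connectionMatrix, mul_comm]

end Leibniz

section Semilinear

variable {F G : Type*} [CommRing F] [CommRing G] (σ : F →+* G)
  {V W : Type*} [AddCommGroup V] [Module F V] [AddCommGroup W] [Module G W]
  {ι : Type*} [Fintype ι] {κ : V →+ W} (hκ : ∀ (c : F) (v : V), κ (c • v) = σ c • κ v)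
  {bV : Basis ι F V} {bW : Basis ι G W} (hb : ∀ i, κ (bV i) = bW i)
include hκ hb

theorem repr_apply_of_semilinear (v : V) (i : ι) : bW.repr (κ v) i = σ (bV.repr v i) := by
  have hκv : κ v = ∑ k, σ (bV.repr v k) • bW k := by
    conv_lhs => rw [← bV.sum_repr v]
    simp only [map_sum, hκ, hb]
  rw [hκv, bW.repr_sum_self]

theorem connectionMatrix_eq_map_of_semilinear {D : V →+ V} {E : W →+ W}
    (hκD : ∀ v, κ (D v) = E (κ v)) :
    bW.connectionMatrix E = (bV.connectionMatrix D).map σ := by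
  ext i j
  simp only [connectionMatrix, Matrix.map_apply, ← hb, ← hκD, repr_apply_of_semilinear σ hκ hb]

end Semilinear

end Module.Basis

namespace LinearMap

variable {R F : Type*} [CommRing R] [CommRing F] [Algebra R F] {δ : Derivation R F F}
  {V V' : Type*} [AddCommGroup V] [Module F V] [AddCommGroup V'] [Module F V']
  {ι ι' : Type*} [Fintype ι] [Fintype ι'] [DecidableEq ι]

theorem map_connection_iff_toMatrix (f : V →ₗ[F] V') (b : Basis ι F V) (b' : Basis ι' F V')
    {D : V →+ V} {D' : V' →+ V'} (hD : ∀ (c : F) (v : V), D (c • v) = δ c • v + c • D v)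
    (hD' : ∀ (c : F) (v : V'), D' (c • v) = δ c • v + c • D' v) :
    (∀ v, f (D v) = D' (f v)) ↔ (toMatrix b b' f).map δ =
      toMatrix b b' f * b.connectionMatrix D - b'.connectionMatrix D' * toMatrix b b' f := by
  set M := toMatrix b b' f
  let θ : V →ₗ[F] V' :=
    { toFun := fun v => f (D v) - D' (f v)
      map_add' := fun v w => by simp only [map_add]; abel
      map_smul' := fun c v => by
        simp only [hD, hD', map_add, map_smul, smul_sub, RingHom.id_apply]; abel }
  have hθ : ∀ i j, b'.repr (θ (b j)) i =
      (M * b.connectionMatrix D - b'.connectionMatrix D' * M - M.map δ) i j := by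
    intro i j
    have hfD : b'.repr (f (D (b j))) i = (M * b.connectionMatrix D) i j := by
      rw [← toMatrix_mulVec_repr b b']; rfl
    have hDf : b'.repr (D' (f (b j))) i = δ (M i j) + (b'.connectionMatrix D' * M) i j := by
      simp [b'.repr_apply_of_leibniz hD', M, toMatrix_apply, mulVec, dotProduct, Matrix.mul_apply]
    simp only [θ, coe_mk, AddHom.coe_mk, map_sub, Finsupp.sub_apply, hfD, hDf, Matrix.sub_apply,
      Matrix.map_apply]
    ring
  calc (∀ v, f (D v) = D' (f v)) ↔ θ = 0 := by simp [LinearMap.ext_iff, θ, sub_eq_zero]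
    _ ↔ ∀ j, θ (b j) = 0 := ⟨fun h j => by simp [h], fun h => b.ext (by simpa using h)⟩
    _ ↔ M * b.connectionMatrix D - b'.connectionMatrix D' * M - M.map δ = 0 := by
      simp only [b'.ext_elem_iff, hθ, map_zero, Finsupp.zero_apply, ← Matrix.ext_iff,
        Matrix.zero_apply]
      exact forall_comm
    _ ↔ _ := by rw [sub_eq_zero, eq_comm]

end LinearMap

namespace Matrix

variable {R F : Type*} [CommRing R] {m n : Type*}

theorem map_derivation_smul [CommRing F] [Algebra R F] (δ : Derivation R F F) (c : F)
    (M : Matrix m n F) : (c • M).map δ = c • M.map δ + δ c • M := by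
  ext
  simp [Derivation.leibniz, mul_comm]

/-- The gauge equation for `u⁻¹ • Q`, with the denominator `u` cleared. -/
theorem map_derivation_inv_smul [Field F] [Algebra R F] [Fintype n] (δ : Derivation R F F)
    {u : F} (hu : u ≠ 0) {Q A₁ A₂ : Matrix n n F}
    (h : u • Q.map δ - δ u • Q = Q * (u • A₁) - (u • A₂) * Q) :
    (u⁻¹ • Q).map δ = (u⁻¹ • Q) * A₁ - A₂ * (u⁻¹ • Q) := by
  obtain ⟨N, rfl⟩ : ∃ N, Q = u • N := ⟨u⁻¹ • Q, by rw [smul_smul, mul_inv_cancel₀ hu, one_smul]⟩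
  rw [smul_smul, inv_mul_cancel₀ hu, one_smul]
  rw [map_derivation_smul] at h
  simp only [Matrix.smul_mul, Matrix.mul_smul, smul_smul] at h
  refine smul_right_injective _ (pow_ne_zero 2 hu) ?_
  linear_combination (norm := module) h

/-- `w • P' - w' • P` is the numerator of `(w⁻¹ • P)'`. -/
theorem map_smul_map_sub_smul [CommRing F] {S : Type*} [CommRing S] (f : F →+* S)
    {d : F → F} {δ : S → S} (h : ∀ x, f (d x) = δ (f x)) (w : F) (P : Matrix m n F) :
    (w • P.map d - d w • P).map f = f w • (P.map f).map δ - δ (f w) • P.map f := by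
  ext i j
  simp [h]

end Matrix

namespace MvPolynomial

variable {K F : Type*} [Field K] [Field F] {σ : Type*}

noncomputable def toRatFunc (φ : MvPolynomial σ K →+* F) :
    MvPolynomial (Option σ) K →+* RatFunc F :=
  (algebraMap (Polynomial F) (RatFunc F)).comp
    ((Polynomial.mapRingHom φ).comp (optionEquivLeft K σ).toRingEquiv.toRingHom)

variable (φ : MvPolynomial σ K →+* F)

@[simp]
theorem toRatFunc_X_none : toRatFunc φ (X none) = RatFunc.X := by
  simp [toRatFunc, RatFunc.algebraMap_X]

@[simp]
theorem toRatFunc_X_some (i : σ) : toRatFunc φ (X (some i)) = RatFunc.C (φ (X i)) := by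
  simp [toRatFunc, RatFunc.algebraMap_C]

@[simp]
theorem toRatFunc_C (k : K) : toRatFunc φ (C k) = RatFunc.C (φ (C k)) := by
  simp [toRatFunc, RatFunc.algebraMap_C]

theorem toRatFunc_injective (hφ : Function.Injective φ) : Function.Injective (toRatFunc φ) := by
  rw [toRatFunc, RingHom.coe_comp, RingHom.coe_comp]
  exact (RatFunc.algebraMap_injective F).comp
    ((Polynomial.map_injective φ hφ).comp (optionEquivLeft K σ).injective)

theorem toRatFunc_eval₂_X_none (r : Polynomial K) :
    toRatFunc φ (r.eval₂ C (X none)) =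
      algebraMap (Polynomial F) (RatFunc F) (r.map (φ.comp C)) := by
  induction r using Polynomial.induction_on with
  | C a => simp [RatFunc.algebraMap_C]
  | add p q hp hq => rw [Polynomial.eval₂_add, map_add, hp, hq, Polynomial.map_add, map_add]
  | monomial n a _ => simp [RatFunc.algebraMap_C, RatFunc.algebraMap_X]

theorem toRatFunc_pderiv_none {δ : Derivation F (RatFunc F) (RatFunc F)} (hδ : δ RatFunc.X = 1)
    (p : MvPolynomial (Option σ) K) : δ (toRatFunc φ p) = toRatFunc φ (pderiv none p) := by
  classical
  induction p using MvPolynomial.induction_on with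
  | C k => simp [← RatFunc.algebraMap_eq_C]
  | add p q hp hq => simp [hp, hq]
  | mul_X p i hp =>
    cases i with
    | none => simp [hp, hδ, Derivation.leibniz, mul_comm, add_comm]
    | some i => simp [hp, Derivation.leibniz, ← RatFunc.algebraMap_eq_C, mul_comm]

theorem exists_toRatFunc_eval_ne_zero [Infinite K] {p : MvPolynomial (Option σ) K} (hp : p ≠ 0) :
    ∃ c : σ → K, toRatFunc (eval c) p ≠ 0 := by
  obtain ⟨x, hx⟩ : ∃ x : Option σ → K, eval x p ≠ 0 := by
    by_contra! h
    exact hp (MvPolynomial.funext fun x => by simp [h x])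
  refine ⟨x ∘ some, fun h => hx ?_⟩
  have hx' : x = fun o => Option.elim o (x none) (x ∘ some) := by ext (_ | _) <;> rfl
  have hmap : (optionEquivLeft K σ p).map (eval (x ∘ some)) = 0 :=
    RatFunc.algebraMap_injective K (by simpa [toRatFunc] using h)
  rw [hx', optionEquivLeft_elim_eval, hmap, Polynomial.eval_zero]

end MvPolynomial

theorem exists_common_denominator {R F : Type*} [CommRing R] [Field F] (α : R →+* F)
    (hα : Subfield.closure (Set.range α) = ⊤) {ι : Type*} [Fintype ι] (g : ι → F) :
    ∃ w, α w ≠ 0 ∧ ∃ p : ι → R, ∀ i, α w * g i = α (p i) := by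
  classical
  have hfrac : ∀ x : F, ∃ q p, α q ≠ 0 ∧ α q * x = α p := by
    intro x
    have hx : x ∈ Subfield.closure (Set.range α) := hα ▸ Subfield.mem_top x
    rw [Subfield.mem_closure_iff, ← RingHom.coe_range, Subring.closure_eq] at hx
    obtain ⟨_, ⟨p, rfl⟩, _, ⟨q, rfl⟩, rfl⟩ := hx
    by_cases hq : α q = 0
    · exact ⟨1, 0, by simp, by simp [hq]⟩
    · exact ⟨q, p, hq, mul_div_cancel₀ _ hq⟩
  choose q p hq hqp using fun i => hfrac (g i)
  refine ⟨∏ i, q i, by simpa [map_prod, Finset.prod_eq_zero_iff] using hq, fun i =>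
    p i * ∏ j ∈ Finset.univ.erase i, q j, fun i => ?_⟩
  rw [← Finset.mul_prod_erase _ _ (Finset.mem_univ i), map_mul, map_mul, ← hqp i]
  ring

section PurelyTranscendental

variable {K L : Type*} [Field K] [Field L] [Algebra K L]

variable (K) in
/-- The inclusion `K[s, x] → L(x)`. -/
noncomputable def genericEval (s : Set L) : MvPolynomial (Option s) K →+* RatFunc L :=
  toRatFunc (aeval ((↑) : s → L)).toRingHom

theorem closure_range_genericEval {s : Set L} (hadj : IntermediateField.adjoin K s = ⊤) :
    Subfield.closure (Set.range (genericEval K s)) = ⊤ := by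
  set T := Subfield.closure (Set.range (genericEval K s))
  have hC : ∀ l : L, RatFunc.C l ∈ T := by
    have hle : Subfield.closure (Set.range (algebraMap K L) ∪ s) ≤ T.comap RatFunc.C := by
      rw [Subfield.closure_le]
      rintro _ (⟨k, rfl⟩ | hl)
      · exact Subfield.subset_closure ⟨C k, by simp [genericEval]⟩
      · exact Subfield.subset_closure ⟨X (some ⟨_, hl⟩), by simp [genericEval]⟩
    rw [← IntermediateField.adjoin_toSubfield, hadj] at hle
    exact fun l => hle (Subfield.mem_top l)
  have hX : RatFunc.X ∈ T := Subfield.subset_closure ⟨X none, by simp [genericEval]⟩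
  have hpoly : ∀ r : Polynomial L, algebraMap (Polynomial L) (RatFunc L) r ∈ T := by
    intro r
    induction r using Polynomial.induction_on with
    | C a => simpa [RatFunc.algebraMap_C] using hC a
    | add p q hp hq => simpa using T.add_mem hp hq
    | monomial n a _ =>
      simpa [RatFunc.algebraMap_C, RatFunc.algebraMap_X] using
        T.mul_mem (hC a) (T.pow_mem hX (n + 1))
  refine eq_top_iff.2 fun g _ => ?_
  rw [← RatFunc.num_div_denom g]
  exact T.div_mem (hpoly _) (hpoly _)

theorem genericEval_injective {s : Set L} (hs : AlgebraicIndependent K ((↑) : s → L)) :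
    Function.Injective (genericEval K s) :=
  toRatFunc_injective _ hs

theorem toRatFunc_eval_eq_of_genericEval_eq {s : Set L} (hs : AlgebraicIndependent K ((↑) : s → L))
    {ι : RatFunc K →+* RatFunc L} (hιC : ∀ a : K, ι (RatFunc.C a) = RatFunc.C (algebraMap K L a))
    (hιX : ι RatFunc.X = RatFunc.X) {B w : MvPolynomial (Option s) K} {a : RatFunc K}
    (h : genericEval K s B = genericEval K s w * ι a) (c : s → K) :
    toRatFunc (eval c) B = toRatFunc (eval c) w * a := by
  set j : Polynomial K → MvPolynomial (Option s) K := fun r => r.eval₂ C (X none)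
  have hgen : ∀ r, genericEval K s (j r) = ι (algebraMap (Polynomial K) (RatFunc K) r) := by
    intro r
    rw [genericEval, toRatFunc_eval₂_X_none]
    induction r using Polynomial.induction_on with
    | C k => simp [RatFunc.algebraMap_C, hιC]
    | add p q hp hq => rw [Polynomial.map_add, map_add, hp, hq, map_add, map_add]
    | monomial n k _ => simp [RatFunc.algebraMap_C, RatFunc.algebraMap_X, hιC, hιX]
  have hspec : ∀ r, toRatFunc (eval c) (j r) = algebraMap (Polynomial K) (RatFunc K) r := by
    intro r
    rw [toRatFunc_eval₂_X_none,
      show (eval c).comp C = RingHom.id K from RingHom.ext (eval_C (f := c)), Polynomial.map_id]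
  have hden := a.denom_ne_zero
  have hfrac : a * algebraMap _ _ a.denom = algebraMap (Polynomial K) (RatFunc K) a.num := by
    nth_rewrite 1 [← RatFunc.num_div_denom a]
    exact div_mul_cancel₀ _ (by simpa using hden)
  have hpoly : B * j a.denom = w * j a.num := by
    apply genericEval_injective hs
    rw [map_mul, map_mul, h, hgen, hgen, ← hfrac, map_mul]
    ring
  have := congrArg (toRatFunc (eval c)) hpoly
  rw [map_mul, map_mul, hspec, hspec, ← hfrac, ← mul_assoc] at this
  exact mul_right_cancel₀ (by simpa using hden) this

theorem exists_polynomial_gauge {s : Set L} (hs : AlgebraicIndependent K ((↑) : s → L))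
    (hadj : IntermediateField.adjoin K s = ⊤)
    {δL : Derivation L (RatFunc L) (RatFunc L)} (hδL : δL RatFunc.X = 1)
    {n : Type*} [Fintype n] [DecidableEq n] {A₁ A₂ M : Matrix n n (RatFunc L)} (hM : M.det ≠ 0)
    (hδM : M.map δL = M * A₁ - A₂ * M) :
    ∃ (w : MvPolynomial (Option s) K) (P B₁ B₂ : Matrix n n (MvPolynomial (Option s) K)),
      genericEval K s w ≠ 0 ∧ P.det ≠ 0 ∧
      B₁.map (genericEval K s) = genericEval K s w • A₁ ∧
      B₂.map (genericEval K s) = genericEval K s w • A₂ ∧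
      w • P.map (pderiv none) - pderiv none w • P = P * B₁ - B₂ * P := by
  set α := genericEval K s
  obtain ⟨w, hw, p, hp⟩ := exists_common_denominator α (closure_range_genericEval hadj)
    (fun x : Fin 3 × n × n => ![M, A₁, A₂] x.1 x.2.1 x.2.2)
  set P : Matrix n n (MvPolynomial (Option s) K) := fun i j => p (0, i, j)
  set B₁ : Matrix n n (MvPolynomial (Option s) K) := fun i j => p (1, i, j)
  set B₂ : Matrix n n (MvPolynomial (Option s) K) := fun i j => p (2, i, j)
  have hP : P.map α = α w • M := by ext i j; exact (hp (0, i, j)).symm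
  have hB₁ : B₁.map α = α w • A₁ := by ext i j; exact (hp (1, i, j)).symm
  have hB₂ : B₂.map α = α w • A₂ := by ext i j; exact (hp (2, i, j)).symm
  refine ⟨w, P, B₁, B₂, hw, fun h => ?_, hB₁, hB₂, ?_⟩
  · have := congrArg α h
    rw [RingHom.map_det, RingHom.mapMatrix_apply, hP, Matrix.det_smul, map_zero] at this
    exact mul_ne_zero (pow_ne_zero _ hw) hM this
  · apply Matrix.map_injective (f := α) (genericEval_injective hs)
    dsimp only
    rw [Matrix.map_smul_map_sub_smul α (fun q => (toRatFunc_pderiv_none _ hδL q).symm),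
      Matrix.map_sub _ (map_sub α), Matrix.map_mul, Matrix.map_mul, hP, hB₁, hB₂,
      Matrix.map_derivation_smul, hδM]
    simp only [Matrix.smul_mul, Matrix.mul_smul, smul_sub, smul_add, smul_comm (α w) (δL (α w)) M]
    abel

theorem exists_gauge_of_baseChange [Infinite K] {s : Set L}
    (hs : AlgebraicIndependent K ((↑) : s → L)) (hadj : IntermediateField.adjoin K s = ⊤)
    {ι : RatFunc K →+* RatFunc L} (hιC : ∀ a : K, ι (RatFunc.C a) = RatFunc.C (algebraMap K L a))
    (hιX : ι RatFunc.X = RatFunc.X)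
    {δK : Derivation K (RatFunc K) (RatFunc K)} (hδK : δK RatFunc.X = 1)
    {δL : Derivation L (RatFunc L) (RatFunc L)} (hδL : δL RatFunc.X = 1)
    {n : Type*} [Fintype n] [DecidableEq n] {A₁ A₂ : Matrix n n (RatFunc K)}
    {M : Matrix n n (RatFunc L)} (hM : M.det ≠ 0)
    (hδM : M.map δL = M * A₁.map ι - A₂.map ι * M) :
    ∃ N : Matrix n n (RatFunc K), N.det ≠ 0 ∧ N.map δK = N * A₁ - A₂ * N := by
  obtain ⟨w, P, B₁, B₂, hw, hP, hB₁, hB₂, hgauge⟩ := exists_polynomial_gauge hs hadj hδL hM hδM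
  obtain ⟨c, hc⟩ := exists_toRatFunc_eval_ne_zero (mul_ne_zero (ne_zero_of_map hw) hP)
  set φ := toRatFunc (eval c)
  rw [map_mul] at hc
  have hφB : ∀ {A : Matrix n n (RatFunc K)} {B : Matrix n n (MvPolynomial (Option s) K)},
      B.map (genericEval K s) = genericEval K s w • A.map ι → B.map φ = φ w • A := fun h => by
    ext i j
    exact toRatFunc_eval_eq_of_genericEval_eq hs hιC hιX (congrFun (congrFun h i) j) c
  refine ⟨(φ w)⁻¹ • P.map φ, ?_, Matrix.map_derivation_inv_smul δK (left_ne_zero_of_mul hc) ?_⟩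
  · rw [Matrix.det_smul, ← RingHom.mapMatrix_apply, ← RingHom.map_det]
    exact mul_ne_zero (pow_ne_zero _ (inv_ne_zero (left_ne_zero_of_mul hc)))
      (right_ne_zero_of_mul hc)
  · have := congrArg (Matrix.map · φ) hgauge
    rwa [Matrix.map_smul_map_sub_smul φ (fun q => (toRatFunc_pderiv_none _ hδK q).symm),
      Matrix.map_sub _ (map_sub φ), Matrix.map_mul, Matrix.map_mul, hφB hB₁, hφB hB₂] at this

end PurelyTranscendental

theorem statement3_general (K L : Type*) [Field K] [CharZero K] [Field L] [Algebra K L]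
    -- `L/K` is purely transcendental:
    (hpure : ∃ s : Set L, IsTranscendenceBasis K ((↑) : s → L) ∧
      IntermediateField.adjoin K s = ⊤)
    -- the inclusion `K(x) → L(x)`:
    (ι : RatFunc K →+* RatFunc L)
    (hιC : ∀ a : K, ι (RatFunc.C a) = RatFunc.C (algebraMap K L a))
    (hιX : ι RatFunc.X = RatFunc.X)
    -- the derivations `d/dx`:
    (δK : Derivation K (RatFunc K) (RatFunc K)) (hδK : δK RatFunc.X = 1)
    (δL : Derivation L (RatFunc L) (RatFunc L)) (hδL : δL RatFunc.X = 1)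
    -- two differential modules over `K(x)`:
    (V₁ V₂ : Type*) [AddCommGroup V₁] [Module (RatFunc K) V₁]
    [AddCommGroup V₂] [Module (RatFunc K) V₂]
    [FiniteDimensional (RatFunc K) V₁]
    (D₁ : V₁ →+ V₁) (hD₁ : ∀ (f : RatFunc K) (v : V₁), D₁ (f • v) = δK f • v + f • D₁ v)
    (D₂ : V₂ →+ V₂) (hD₂ : ∀ (f : RatFunc K) (v : V₂), D₂ (f • v) = δK f • v + f • D₂ v)
    -- their base changes to `L(x)`:
    (W₁ W₂ : Type*) [AddCommGroup W₁] [Module (RatFunc L) W₁]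
    [AddCommGroup W₂] [Module (RatFunc L) W₂]
    (E₁ : W₁ →+ W₁) (hE₁ : ∀ (f : RatFunc L) (w : W₁), E₁ (f • w) = δL f • w + f • E₁ w)
    (E₂ : W₂ →+ W₂) (hE₂ : ∀ (f : RatFunc L) (w : W₂), E₂ (f • w) = δL f • w + f • E₂ w)
    (κ₁ : V₁ →+ W₁) (hκ₁ : ∀ (f : RatFunc K) (v : V₁), κ₁ (f • v) = ι f • κ₁ v)
    (hκ₁D : ∀ v : V₁, κ₁ (D₁ v) = E₁ (κ₁ v))
    (κ₂ : V₂ →+ W₂) (hκ₂ : ∀ (f : RatFunc K) (v : V₂), κ₂ (f • v) = ι f • κ₂ v)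
    (hκ₂D : ∀ v : V₂, κ₂ (D₂ v) = E₂ (κ₂ v))
    (ι₁ ι₂ : Type*)
    (bV₁ : Module.Basis ι₁ (RatFunc K) V₁) (bW₁ : Module.Basis ι₁ (RatFunc L) W₁)
    (hb₁ : ∀ i, κ₁ (bV₁ i) = bW₁ i)
    (bV₂ : Module.Basis ι₂ (RatFunc K) V₂) (bW₂ : Module.Basis ι₂ (RatFunc L) W₂)
    (hb₂ : ∀ i, κ₂ (bV₂ i) = bW₂ i)
    -- the hypothesis: `W₁ ≅ W₂` as differential modules over `L(x)`:
    (hiso : ∃ Φ : W₁ ≃ₗ[RatFunc L] W₂, ∀ w : W₁, Φ (E₁ w) = E₂ (Φ w)) :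
    -- conclusion: `V₁ ≅ V₂` as differential modules over `K(x)`:
    ∃ Ψ : V₁ ≃ₗ[RatFunc K] V₂, ∀ v : V₁, Ψ (D₁ v) = D₂ (Ψ v) := by
  classical
  obtain ⟨s, hs, hadj⟩ := hpure
  obtain ⟨Φ, hΦ⟩ := hiso
  have := Module.Finite.finite_basis bV₁
  have := Fintype.ofFinite ι₁
  set e : ι₂ ≃ ι₁ := (bW₂.map Φ.symm).indexEquiv bW₁
  have hb₂' : ∀ i, κ₂ (bV₂.reindex e i) = bW₂.reindex e i := fun i => by simp [hb₂]
  have hM := (Φ.toLinearMap.map_connection_iff_toMatrix bW₁ (bW₂.reindex e) hE₁ hE₂).1 hΦ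
  rw [Basis.connectionMatrix_eq_map_of_semilinear ι hκ₁ hb₁ hκ₁D,
    Basis.connectionMatrix_eq_map_of_semilinear ι hκ₂ hb₂' hκ₂D] at hM
  obtain ⟨N, hN, hδN⟩ := exists_gauge_of_baseChange hs.1 hadj hιC hιX hδK hδL
    (LinearEquiv.isUnit_det Φ bW₁ (bW₂.reindex e)).ne_zero hM
  set f := Matrix.toLin bV₁ (bV₂.reindex e) N
  have hf : LinearMap.toMatrix bV₁ (bV₂.reindex e) f = N := LinearMap.toMatrix_toLin _ _ N
  refine ⟨LinearEquiv.ofIsUnitDet (by rw [hf]; exact hN.isUnit), ?_⟩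
  exact (f.map_connection_iff_toMatrix bV₁ (bV₂.reindex e) hD₁ hD₂).2 (by rwa [hf])

theorem statement3 (K L : Type*) [Field K] [CharZero K] [Field L] [Algebra K L]
    -- `L/K` is purely transcendental:
    (hpure : ∃ s : Set L, IsTranscendenceBasis K ((↑) : s → L) ∧
      IntermediateField.adjoin K s = ⊤)
    -- the inclusion `K(x) → L(x)`:
    (ι : RatFunc K →+* RatFunc L)
    (hιC : ∀ a : K, ι (RatFunc.C a) = RatFunc.C (algebraMap K L a))
    (hιX : ι RatFunc.X = RatFunc.X)
    -- the derivations `d/dx`: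
    (δK : Derivation K (RatFunc K) (RatFunc K)) (hδK : δK RatFunc.X = 1)
    (δL : Derivation L (RatFunc L) (RatFunc L)) (hδL : δL RatFunc.X = 1)
    -- two differential modules over `K(x)`:
    (V₁ V₂ : Type*) [AddCommGroup V₁] [Module (RatFunc K) V₁]
    [AddCommGroup V₂] [Module (RatFunc K) V₂]
    [FiniteDimensional (RatFunc K) V₁] [FiniteDimensional (RatFunc K) V₂]
    (D₁ : V₁ →+ V₁) (hD₁ : ∀ (f : RatFunc K) (v : V₁), D₁ (f • v) = δK f • v + f • D₁ v)
    (D₂ : V₂ →+ V₂) (hD₂ : ∀ (f : RatFunc K) (v : V₂), D₂ (f • v) = δK f • v + f • D₂ v)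
    -- their base changes to `L(x)`:
    (W₁ W₂ : Type*) [AddCommGroup W₁] [Module (RatFunc L) W₁]
    [AddCommGroup W₂] [Module (RatFunc L) W₂]
    (E₁ : W₁ →+ W₁) (hE₁ : ∀ (f : RatFunc L) (w : W₁), E₁ (f • w) = δL f • w + f • E₁ w)
    (E₂ : W₂ →+ W₂) (hE₂ : ∀ (f : RatFunc L) (w : W₂), E₂ (f • w) = δL f • w + f • E₂ w)
    (κ₁ : V₁ →+ W₁) (hκ₁ : ∀ (f : RatFunc K) (v : V₁), κ₁ (f • v) = ι f • κ₁ v)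
    (hκ₁D : ∀ v : V₁, κ₁ (D₁ v) = E₁ (κ₁ v))
    (κ₂ : V₂ →+ W₂) (hκ₂ : ∀ (f : RatFunc K) (v : V₂), κ₂ (f • v) = ι f • κ₂ v)
    (hκ₂D : ∀ v : V₂, κ₂ (D₂ v) = E₂ (κ₂ v))
    (ι₁ ι₂ : Type*)
    (bV₁ : Module.Basis ι₁ (RatFunc K) V₁) (bW₁ : Module.Basis ι₁ (RatFunc L) W₁)
    (hb₁ : ∀ i, κ₁ (bV₁ i) = bW₁ i)
    (bV₂ : Module.Basis ι₂ (RatFunc K) V₂) (bW₂ : Module.Basis ι₂ (RatFunc L) W₂)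
    (hb₂ : ∀ i, κ₂ (bV₂ i) = bW₂ i)
    -- the hypothesis: `W₁ ≅ W₂` as differential modules over `L(x)`:
    (hiso : ∃ Φ : W₁ ≃ₗ[RatFunc L] W₂, ∀ w : W₁, Φ (E₁ w) = E₂ (Φ w)) :
    -- conclusion: `V₁ ≅ V₂` as differential modules over `K(x)`:
    ∃ Ψ : V₁ ≃ₗ[RatFunc K] V₂, ∀ v : V₁, Ψ (D₁ v) = D₂ (Ψ v) :=
  statement3_general K L hpure ι hιC hιX δK hδK δL hδL V₁ V₂ D₁ hD₁ D₂ hD₂ W₁ W₂ E₁ hE₁ E₂ hE₂ κ₁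
    hκ₁ hκ₁D κ₂ hκ₂ hκ₂D ι₁ ι₂ bV₁ bW₁ hb₁ bV₂ bW₂ hb₂ hiso
end

section
/- Let K be a field of characteristic zero and L/K a finite Galois extension. Let N₁, N₂ be differential modules over K(x). If N₁ ⊗_{K(x)} L(x) ≅ N₂ ⊗_{K(x)} L(x) as differential modules over L(x), then N₁ ≅ N₂ as differential modules over K(x). -/
/-!
Fix bases of `N₁`, `N₂` and let `A₁`, `A₂` be the matrices of their derivations. A horizontal
isomorphism `N₁ ⊗ L(x) ≅ N₂ ⊗ L(x)` is an invertible matrix `P` over `L(x)` with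
`δP = P A₁ - A₂ P`. If `b₁, …, b_m` is a `K`-basis of `L`, the constants `b_j` also form a
`K(x)`-basis of `L(x)`, so `P = ∑ b_j Q_j` with `Q_j` over `K(x)`; since `δ b_j = 0`, each `Q_j`
solves the same equation. The polynomial `det (∑ T_j Q_j)` does not vanish at `T = b`, and `K` is
infinite, so it does not vanish at some `a ∈ K^m`: then `Q = ∑ a_j Q_j` is an invertible
solution over `K(x)`, i.e. a horizontal isomorphism `N₁ ≅ N₂`.
-/

open Matrix Module

section DifferentialModule

variable {k F : Type*} [CommRing k] [CommRing F] [Algebra k F] (δ : Derivation k F F)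

theorem Derivation.comp_mulVec {m n : Type*} [Fintype n] (Q : Matrix m n F) (c : n → F) :
    ⇑δ ∘ (Q *ᵥ c) = Q.map δ *ᵥ c + Q *ᵥ (⇑δ ∘ c) := by
  ext i
  simp only [Function.comp_apply, mulVec, dotProduct, map_sum, Derivation.leibniz, smul_eq_mul,
    Pi.add_apply, map_apply, ← Finset.sum_add_distrib]
  exact Finset.sum_congr rfl fun j _ => by ring

variable {ι V : Type*} [AddCommGroup V] [Module F V]

noncomputable def connectionMatrix (b : Basis ι F V) (D : V →+ V) : Matrix ι ι F :=
  Matrix.of fun i j => b.repr (D (b j)) i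

theorem repr_apply_of_leibniz [Fintype ι] (b : Basis ι F V) {D : V →+ V}
    (hD : ∀ (f : F) (v : V), D (f • v) = δ f • v + f • D v) (v : V) :
    ⇑(b.repr (D v)) = ⇑δ ∘ ⇑(b.repr v) + connectionMatrix b D *ᵥ ⇑(b.repr v) := by
  classical
  ext i
  conv_lhs => rw [← b.sum_repr v, map_sum]
  simp [hD, Finset.sum_add_distrib, Finsupp.single_apply, mulVec, dotProduct, connectionMatrix,
    mul_comm]

noncomputable def intertwiningDefect {m n : Type*} [Fintype m] [Fintype n]
    (A₁ : Matrix m m F) (A₂ : Matrix n n F) : Matrix n m F →ₗ[k] Matrix n m F where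
  toFun Q := Q * A₁ - A₂ * Q - Q.map δ
  map_add' Q R := by
    simp only [Matrix.add_mul, Matrix.mul_add, Matrix.map_add _ (map_add δ)]
    abel
  map_smul' c Q := by
    simp only [Matrix.smul_mul, Matrix.mul_smul, Matrix.map_smul _ c (δ.map_smul c),
      RingHom.id_apply, smul_sub]

theorem connectionMatrix_eq_map [Fintype ι] {E W : Type*} [CommRing E] [AddCommGroup W]
    [Module E W] (φ : F →+* E) (bV : Basis ι F V) (bW : Basis ι E W)
    {D : V →+ V} {D' : W →+ W}
    (κ : V →+ W) (hκ : ∀ (f : F) (v : V), κ (f • v) = φ f • κ v)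
    (hκD : ∀ v, κ (D v) = D' (κ v)) (hb : ∀ i, κ (bV i) = bW i) :
    connectionMatrix bW D' = (connectionMatrix bV D).map φ := by
  ext i j
  have hexp : D' (bW j) = ∑ l, φ (bV.repr (D (bV j)) l) • bW l := by
    rw [← hb, ← hκD, ← bV.sum_repr (D (bV j)), map_sum]
    simp only [hκ, hb, Basis.repr_sum_self]
  simp only [connectionMatrix, Matrix.of_apply, Matrix.map_apply, hexp]
  rw [bW.repr_sum_self]

variable {ι₁ ι₂ V₁ V₂ : Type*} [Fintype ι₁] [Fintype ι₂] [DecidableEq ι₁]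
  [AddCommGroup V₁] [Module F V₁] [AddCommGroup V₂] [Module F V₂]
  (b₁ : Basis ι₁ F V₁) (b₂ : Basis ι₂ F V₂) {D₁ : V₁ →+ V₁} {D₂ : V₂ →+ V₂}
  (hD₁ : ∀ (f : F) (v : V₁), D₁ (f • v) = δ f • v + f • D₁ v)
  (hD₂ : ∀ (f : F) (v : V₂), D₂ (f • v) = δ f • v + f • D₂ v)
include hD₁ hD₂

theorem repr_sub_eq_intertwiningDefect_mulVec (ψ : V₁ →ₗ[F] V₂) (v : V₁) :
    ⇑(b₂.repr (ψ (D₁ v) - D₂ (ψ v))) =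
      intertwiningDefect δ (connectionMatrix b₁ D₁) (connectionMatrix b₂ D₂)
        (LinearMap.toMatrix b₁ b₂ ψ) *ᵥ ⇑(b₁.repr v) := by
  set Q := LinearMap.toMatrix b₁ b₂ ψ
  have hψ : ∀ w, ⇑(b₂.repr (ψ w)) = Q *ᵥ ⇑(b₁.repr w) := fun w =>
    (LinearMap.toMatrix_mulVec_repr b₁ b₂ ψ w).symm
  rw [map_sub, Finsupp.coe_sub, hψ, repr_apply_of_leibniz δ b₂ hD₂, hψ,
    repr_apply_of_leibniz δ b₁ hD₁, δ.comp_mulVec]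
  simp only [intertwiningDefect, LinearMap.coe_mk, AddHom.coe_mk, Matrix.sub_mulVec,
    Matrix.mulVec_add, Matrix.mulVec_mulVec]
  abel

theorem intertwines_iff_toMatrix_mem_ker (ψ : V₁ →ₗ[F] V₂) :
    (∀ v, ψ (D₁ v) = D₂ (ψ v)) ↔ LinearMap.toMatrix b₁ b₂ ψ ∈ LinearMap.ker
      (intertwiningDefect δ (connectionMatrix b₁ D₁) (connectionMatrix b₂ D₂)) := by
  rw [LinearMap.mem_ker]
  constructor
  · intro h
    refine Matrix.mulVec_injective (funext fun c => ?_)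
    obtain ⟨v, rfl⟩ := b₁.equivFun.surjective c
    rw [b₁.equivFun_apply, ← repr_sub_eq_intertwiningDefect_mulVec δ b₁ b₂ hD₁ hD₂, h,
      sub_self, map_zero, Matrix.zero_mulVec]
    rfl
  · intro h v
    rw [← sub_eq_zero, ← b₂.repr.map_eq_zero_iff, ← DFunLike.coe_fn_eq,
      repr_sub_eq_intertwiningDefect_mulVec δ b₁ b₂ hD₁ hD₂, h, Matrix.zero_mulVec]
    rfl

end DifferentialModule

section Descent

variable {k F E : Type*} [Field k] [Field F] [Algebra k F] [Field E] [Algebra F E]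
  {m n : Type*} [Fintype m] [Fintype n]

theorem exists_isUnit_det_sum_smul [DecidableEq n] [Infinite k] (Q : m → Matrix n n F)
    (w : m → E) (h : IsUnit (∑ j, w j • (Q j).map (algebraMap F E)).det) :
    ∃ a : m → k, IsUnit (∑ j, a j • Q j).det := by
  let N : Matrix n n (MvPolynomial m F) :=
    Matrix.of fun i l => ∑ j, MvPolynomial.X j * MvPolynomial.C (Q j i l)
  have eval_det : ∀ x : m → F, MvPolynomial.eval x N.det = (∑ j, x j • Q j).det := by
    intro x
    rw [RingHom.map_det]
    congr 1
    ext i l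
    simp [N, Matrix.sum_apply]
  have det_ne_zero : N.det ≠ 0 := by
    intro h0
    have := congrArg (MvPolynomial.eval₂Hom (algebraMap F E) w) h0
    rw [RingHom.map_det, map_zero] at this
    apply h.ne_zero
    rw [← this]
    congr 1
    ext i l
    simp [N, Matrix.sum_apply]
  obtain ⟨x, hx, hxN⟩ : ∃ x ∈ Set.univ.pi fun _ => Set.range (algebraMap k F),
      MvPolynomial.eval x N.det ≠ 0 := by
    by_contra! h0
    exact det_ne_zero <| MvPolynomial.funext_set _
      (fun _ => Set.infinite_range_of_injective (algebraMap k F).injective)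
      fun x hx => by rw [h0 x hx, map_zero]
  choose a ha using fun j => hx j trivial
  refine ⟨a, isUnit_iff_ne_zero.mpr ?_⟩
  rw [eval_det, ← funext ha] at hxN
  simpa [algebraMap_smul] using hxN

variable (δF : Derivation k F F) {k' : Type*} [CommRing k'] [Algebra k' E]
  (δE : Derivation k' E E) (B : Basis m F E) (hB : ∀ j, δE (B j) = 0)
  (hδ : ∀ f, δE (algebraMap F E f) = algebraMap F E (δF f))
include hB hδ

theorem repr_derivation_of_basis_constant (e : E) :
    ⇑(B.repr (δE e)) = ⇑δF ∘ ⇑(B.repr e) := by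
  have hterm : ∀ (c : F) (j : m), δE (c • B j) = δF c • B j := by
    intro c j
    rw [Algebra.smul_def, Derivation.leibniz, hB, hδ, smul_zero, zero_add, smul_eq_mul, mul_comm,
      ← Algebra.smul_def]
  conv_lhs => rw [← B.sum_repr e, map_sum]
  simp only [hterm, B.repr_sum_self]
  rfl

theorem map_coord_mem_ker_intertwiningDefect (A₁ A₂ : Matrix n n F) {P : Matrix n n E}
    (hP : P ∈ LinearMap.ker
      (intertwiningDefect δE (A₁.map (algebraMap F E)) (A₂.map (algebraMap F E))))
    (j : m) : P.map (B.coord j) ∈ LinearMap.ker (intertwiningDefect δF A₁ A₂) := by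
  rw [LinearMap.mem_ker] at hP ⊢
  have hcoord := congrArg (Matrix.map · (B.coord j)) hP
  simp only [intertwiningDefect, LinearMap.coe_mk, AddHom.coe_mk] at hcoord ⊢
  rw [Matrix.map_zero _ (map_zero _)] at hcoord
  rw [← hcoord]
  ext i l
  simp only [Matrix.sub_apply, Matrix.mul_apply, Matrix.map_apply, Basis.coord_apply, map_sub,
    map_sum, repr_derivation_of_basis_constant δF δE B hB hδ, Function.comp_apply,
    ← Algebra.commutes, ← Algebra.smul_def, map_smul, smul_eq_mul, mul_comm (A₁ _ l)]

theorem exists_isUnit_det_mem_ker_intertwiningDefect [DecidableEq n] [Infinite k]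
    (A₁ A₂ : Matrix n n F) {P : Matrix n n E} (hP : P ∈ LinearMap.ker
      (intertwiningDefect δE (A₁.map (algebraMap F E)) (A₂.map (algebraMap F E))))
    (hPdet : IsUnit P.det) :
    ∃ Q ∈ LinearMap.ker (intertwiningDefect δF A₁ A₂), IsUnit Q.det := by
  have hPQ : P = ∑ j, B j • (P.map (B.coord j)).map (algebraMap F E) := by
    ext i l
    rw [Matrix.sum_apply]
    conv_lhs => rw [← B.sum_repr (P i l)]
    refine Finset.sum_congr rfl fun j _ => ?_
    rw [Matrix.smul_apply, Matrix.map_apply, Matrix.map_apply, Basis.coord_apply, smul_eq_mul,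
      Algebra.smul_def, mul_comm]
  rw [hPQ] at hPdet
  obtain ⟨a, ha⟩ := exists_isUnit_det_sum_smul (k := k) _ _ hPdet
  exact ⟨_, Submodule.sum_mem _ fun j _ => Submodule.smul_mem _ _
    (map_coord_mem_ker_intertwiningDefect δF δE B hB hδ A₁ A₂ hP j), ha⟩

end Descent

section RatFunc

open Polynomial
open scoped nonZeroDivisors

attribute [local instance] Polynomial.algebra RatFunc.liftAlgebra

variable {K L : Type*} [Field K] [Field L] [Algebra K L]

theorem RatFunc.ringHom_ext {A : Type*} [Semiring A] {φ ψ : RatFunc K →+* A}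
    (hC : ∀ a, φ (RatFunc.C a) = ψ (RatFunc.C a)) (hX : φ RatFunc.X = ψ RatFunc.X) : φ = ψ :=
  IsLocalization.ringHom_ext K[X]⁰ <| Polynomial.ringHom_ext
    (fun a => by simpa [RatFunc.algebraMap_C] using hC a)
    (by simpa [RatFunc.algebraMap_X] using hX)

theorem RatFunc.algebraMap_ratFunc_C (a : K) :
    algebraMap (RatFunc K) (RatFunc L) (RatFunc.C a) = RatFunc.C (algebraMap K L a) := by
  rw [← RatFunc.algebraMap_C, ← RatFunc.algebraMap_C, ← IsScalarTower.algebraMap_apply]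
  rw [IsScalarTower.algebraMap_apply K[X] L[X] (RatFunc L)]
  simp

theorem RatFunc.algebraMap_ratFunc_X :
    algebraMap (RatFunc K) (RatFunc L) RatFunc.X = RatFunc.X := by
  rw [← RatFunc.algebraMap_X, ← RatFunc.algebraMap_X, ← IsScalarTower.algebraMap_apply]
  rw [IsScalarTower.algebraMap_apply K[X] L[X] (RatFunc L)]
  simp

theorem RatFunc.derivation_ext {M : Type*} [AddCommGroup M] [Module (RatFunc K) M] [Module K M]
    [IsScalarTower K (RatFunc K) M] {D₁ D₂ : Derivation K (RatFunc K) M}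
    (h : D₁ RatFunc.X = D₂ RatFunc.X) : D₁ = D₂ := by
  have hpoly : ∀ p : K[X], D₁ (algebraMap K[X] (RatFunc K) p) = D₂ (algebraMap _ _ p) := by
    intro p
    rw [← RatFunc.aeval_X_left_eq_algebraMap]
    exact Derivation.eqOn_adjoin (Set.eqOn_singleton.mpr h)
      (Polynomial.aeval_mem_adjoin_singleton K RatFunc.X)
  ext f
  set q := algebraMap K[X] (RatFunc K) f.denom
  have hq : q ≠ 0 := RatFunc.algebraMap_ne_zero f.denom_ne_zero
  have hfq : f * q = algebraMap K[X] (RatFunc K) f.num := by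
    rw [eq_comm, ← div_eq_iff hq, RatFunc.num_div_denom]
  refine smul_right_injective M hq ?_
  calc q • D₁ f = D₁ (f * q) - f • D₁ q := by rw [Derivation.leibniz]; abel
    _ = D₂ (f * q) - f • D₂ q := by rw [hfq, hpoly, hpoly]
    _ = q • D₂ f := by rw [Derivation.leibniz]; abel

theorem RatFunc.derivation_algebraMap (δK : Derivation K (RatFunc K) (RatFunc K))
    (hδK : δK RatFunc.X = 1) (δL : Derivation L (RatFunc L) (RatFunc L))
    (hδL : δL RatFunc.X = 1) (f : RatFunc K) :
    δL (algebraMap (RatFunc K) (RatFunc L) f) = algebraMap (RatFunc K) (RatFunc L) (δK f) := by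
  have := RatFunc.derivation_ext (D₁ := (δL.restrictScalars K).compAlgebraMap (RatFunc K))
    (D₂ := (Algebra.linearMap (RatFunc K) (RatFunc L)).compDer δK)
    (by simp [hδK, hδL, RatFunc.algebraMap_ratFunc_X])
  exact congrArg (· f) this

theorem RatFunc.exists_basis_C [Algebra.IsAlgebraic K L] {m : Type*} (b : Basis m K L) :
    ∃ B : Basis m (RatFunc K) (RatFunc L), ∀ j, B j = RatFunc.C (b j) := by
  have h := ((Algebra.isPushout_iff K K[X] L L[X]).mp inferInstance).comp
    (Algebra.IsAlgebraic.isBaseChange_of_isFractionRing K[X] L[X] (RatFunc K) (RatFunc L))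
  refine ⟨h.basis b, fun j => ?_⟩
  rw [IsBaseChange.basis_apply]
  simp [RatFunc.algebraMap_C]

theorem RatFunc.exists_isUnit_det_mem_ker_intertwiningDefect [Infinite K] [FiniteDimensional K L]
    {n : Type*} [Fintype n] [DecidableEq n] (ι : RatFunc K →+* RatFunc L)
    (hιC : ∀ a : K, ι (RatFunc.C a) = RatFunc.C (algebraMap K L a))
    (hιX : ι RatFunc.X = RatFunc.X)
    (δK : Derivation K (RatFunc K) (RatFunc K)) (hδK : δK RatFunc.X = 1)
    (δL : Derivation L (RatFunc L) (RatFunc L)) (hδL : δL RatFunc.X = 1)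
    (A₁ A₂ : Matrix n n (RatFunc K)) {P : Matrix n n (RatFunc L)}
    (hP : P ∈ LinearMap.ker (intertwiningDefect δL (A₁.map ι) (A₂.map ι)))
    (hPdet : IsUnit P.det) :
    ∃ Q ∈ LinearMap.ker (intertwiningDefect δK A₁ A₂), IsUnit Q.det := by
  obtain rfl : ι = algebraMap (RatFunc K) (RatFunc L) := RatFunc.ringHom_ext
    (fun a => by rw [hιC, RatFunc.algebraMap_ratFunc_C]) (by rw [hιX, RatFunc.algebraMap_ratFunc_X])
  obtain ⟨B, hB⟩ := RatFunc.exists_basis_C (Module.finBasis K L)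
  have hBconst : ∀ j, δL (B j) = 0 := fun j => by
    rw [hB, ← RatFunc.algebraMap_eq_C, Derivation.map_algebraMap]
  exact _root_.exists_isUnit_det_mem_ker_intertwiningDefect δK δL B hBconst
    (RatFunc.derivation_algebraMap δK hδK δL hδL) A₁ A₂ hP hPdet

end RatFunc

theorem statement4_general (K L : Type*) [Field K] [CharZero K] [Field L] [Algebra K L]
    -- `L/K` is a finite Galois extension:
    [FiniteDimensional K L]
    -- the inclusion `K(x) → L(x)`:
    (ι : RatFunc K →+* RatFunc L)
    (hιC : ∀ a : K, ι (RatFunc.C a) = RatFunc.C (algebraMap K L a))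
    (hιX : ι RatFunc.X = RatFunc.X)
    -- the derivations `d/dx`:
    (δK : Derivation K (RatFunc K) (RatFunc K)) (hδK : δK RatFunc.X = 1)
    (δL : Derivation L (RatFunc L) (RatFunc L)) (hδL : δL RatFunc.X = 1)
    -- two differential modules over `K(x)`:
    (V₁ V₂ : Type*) [AddCommGroup V₁] [Module (RatFunc K) V₁]
    [AddCommGroup V₂] [Module (RatFunc K) V₂]
    [FiniteDimensional (RatFunc K) V₁]
    (D₁ : V₁ →+ V₁) (hD₁ : ∀ (f : RatFunc K) (v : V₁), D₁ (f • v) = δK f • v + f • D₁ v)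
    (D₂ : V₂ →+ V₂) (hD₂ : ∀ (f : RatFunc K) (v : V₂), D₂ (f • v) = δK f • v + f • D₂ v)
    -- their base changes to `L(x)`:
    (W₁ W₂ : Type*) [AddCommGroup W₁] [Module (RatFunc L) W₁]
    [AddCommGroup W₂] [Module (RatFunc L) W₂]
    (E₁ : W₁ →+ W₁) (hE₁ : ∀ (f : RatFunc L) (w : W₁), E₁ (f • w) = δL f • w + f • E₁ w)
    (E₂ : W₂ →+ W₂) (hE₂ : ∀ (f : RatFunc L) (w : W₂), E₂ (f • w) = δL f • w + f • E₂ w)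
    (κ₁ : V₁ →+ W₁) (hκ₁ : ∀ (f : RatFunc K) (v : V₁), κ₁ (f • v) = ι f • κ₁ v)
    (hκ₁D : ∀ v : V₁, κ₁ (D₁ v) = E₁ (κ₁ v))
    (κ₂ : V₂ →+ W₂) (hκ₂ : ∀ (f : RatFunc K) (v : V₂), κ₂ (f • v) = ι f • κ₂ v)
    (hκ₂D : ∀ v : V₂, κ₂ (D₂ v) = E₂ (κ₂ v))
    (ι₁ ι₂ : Type*)
    (bV₁ : Module.Basis ι₁ (RatFunc K) V₁) (bW₁ : Module.Basis ι₁ (RatFunc L) W₁)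
    (hb₁ : ∀ i, κ₁ (bV₁ i) = bW₁ i)
    (bV₂ : Module.Basis ι₂ (RatFunc K) V₂) (bW₂ : Module.Basis ι₂ (RatFunc L) W₂)
    (hb₂ : ∀ i, κ₂ (bV₂ i) = bW₂ i)
    -- the hypothesis: `W₁ ≅ W₂` as differential modules over `L(x)`:
    (hiso : ∃ Φ : W₁ ≃ₗ[RatFunc L] W₂, ∀ w : W₁, Φ (E₁ w) = E₂ (Φ w)) :
    -- conclusion: `V₁ ≅ V₂` as differential modules over `K(x)`:
    ∃ Ψ : V₁ ≃ₗ[RatFunc K] V₂, ∀ v : V₁, Ψ (D₁ v) = D₂ (Ψ v) := by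
  classical
  obtain ⟨Φ, hΦ⟩ := hiso
  have := CharZero.infinite K
  have : Fintype ι₁ := FiniteDimensional.fintypeBasisIndex bV₁
  let e : ι₂ ≃ ι₁ := (bW₂.map Φ.symm).indexEquiv bW₁
  have : Fintype ι₂ := Fintype.ofEquiv ι₁ e.symm
  let bV₂' := bV₂.reindex e
  let bW₂' := bW₂.reindex e
  have hb₂' : ∀ i, κ₂ (bV₂' i) = bW₂' i := fun i => by simp [bV₂', bW₂', hb₂]
  have hP := (intertwines_iff_toMatrix_mem_ker δL bW₁ bW₂' hE₁ hE₂ Φ.toLinearMap).mp hΦ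
  rw [connectionMatrix_eq_map ι bV₁ bW₁ κ₁ hκ₁ hκ₁D hb₁,
    connectionMatrix_eq_map ι bV₂' bW₂' κ₂ hκ₂ hκ₂D hb₂'] at hP
  obtain ⟨Q, hQ, hQdet⟩ := RatFunc.exists_isUnit_det_mem_ker_intertwiningDefect ι hιC hιX
    δK hδK δL hδL _ _ hP (Φ.isUnit_det bW₁ bW₂')
  let Ψ := Matrix.toLin bV₁ bV₂' Q
  have hΨ : LinearMap.toMatrix bV₁ bV₂' Ψ = Q := LinearMap.toMatrix_toLin _ _ Q
  refine ⟨LinearEquiv.ofIsUnitDet (f := Ψ) (hΨ ▸ hQdet), ?_⟩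
  exact (intertwines_iff_toMatrix_mem_ker δK bV₁ bV₂' hD₁ hD₂ Ψ).mpr (hΨ ▸ hQ)

theorem statement4 (K L : Type*) [Field K] [CharZero K] [Field L] [Algebra K L]
    -- `L/K` is a finite Galois extension:
    [FiniteDimensional K L] [IsGalois K L]
    -- the inclusion `K(x) → L(x)`:
    (ι : RatFunc K →+* RatFunc L)
    (hιC : ∀ a : K, ι (RatFunc.C a) = RatFunc.C (algebraMap K L a))
    (hιX : ι RatFunc.X = RatFunc.X)
    -- the derivations `d/dx`:
    (δK : Derivation K (RatFunc K) (RatFunc K)) (hδK : δK RatFunc.X = 1)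
    (δL : Derivation L (RatFunc L) (RatFunc L)) (hδL : δL RatFunc.X = 1)
    -- two differential modules over `K(x)`:
    (V₁ V₂ : Type*) [AddCommGroup V₁] [Module (RatFunc K) V₁]
    [AddCommGroup V₂] [Module (RatFunc K) V₂]
    [FiniteDimensional (RatFunc K) V₁] [FiniteDimensional (RatFunc K) V₂]
    (D₁ : V₁ →+ V₁) (hD₁ : ∀ (f : RatFunc K) (v : V₁), D₁ (f • v) = δK f • v + f • D₁ v)
    (D₂ : V₂ →+ V₂) (hD₂ : ∀ (f : RatFunc K) (v : V₂), D₂ (f • v) = δK f • v + f • D₂ v)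
    -- their base changes to `L(x)`:
    (W₁ W₂ : Type*) [AddCommGroup W₁] [Module (RatFunc L) W₁]
    [AddCommGroup W₂] [Module (RatFunc L) W₂]
    (E₁ : W₁ →+ W₁) (hE₁ : ∀ (f : RatFunc L) (w : W₁), E₁ (f • w) = δL f • w + f • E₁ w)
    (E₂ : W₂ →+ W₂) (hE₂ : ∀ (f : RatFunc L) (w : W₂), E₂ (f • w) = δL f • w + f • E₂ w)
    (κ₁ : V₁ →+ W₁) (hκ₁ : ∀ (f : RatFunc K) (v : V₁), κ₁ (f • v) = ι f • κ₁ v)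
    (hκ₁D : ∀ v : V₁, κ₁ (D₁ v) = E₁ (κ₁ v))
    (κ₂ : V₂ →+ W₂) (hκ₂ : ∀ (f : RatFunc K) (v : V₂), κ₂ (f • v) = ι f • κ₂ v)
    (hκ₂D : ∀ v : V₂, κ₂ (D₂ v) = E₂ (κ₂ v))
    (ι₁ ι₂ : Type*)
    (bV₁ : Module.Basis ι₁ (RatFunc K) V₁) (bW₁ : Module.Basis ι₁ (RatFunc L) W₁)
    (hb₁ : ∀ i, κ₁ (bV₁ i) = bW₁ i)
    (bV₂ : Module.Basis ι₂ (RatFunc K) V₂) (bW₂ : Module.Basis ι₂ (RatFunc L) W₂)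
    (hb₂ : ∀ i, κ₂ (bV₂ i) = bW₂ i)
    -- the hypothesis: `W₁ ≅ W₂` as differential modules over `L(x)`:
    (hiso : ∃ Φ : W₁ ≃ₗ[RatFunc L] W₂, ∀ w : W₁, Φ (E₁ w) = E₂ (Φ w)) :
    -- conclusion: `V₁ ≅ V₂` as differential modules over `K(x)`:
    ∃ Ψ : V₁ ≃ₗ[RatFunc K] V₂, ∀ v : V₁, Ψ (D₁ v) = D₂ (Ψ v) :=
  statement4_general K L ι hιC hιX δK hδK δL hδL V₁ V₂ D₁ hD₁ D₂ hD₂ W₁ W₂ E₁ hE₁ E₂ hE₂ κ₁ hκ₁ hκ₁D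
    κ₂ hκ₂ hκ₂D ι₁ ι₂ bV₁ bW₁ hb₁ bV₂ bW₂ hb₂ hiso
end

section
/- Let ℰ be an algebraic flat connection on a smooth complex variety X and M a holonomic D_X-module, with f : X → ℂ smooth of fiber Y. If V_• is a good V-filtration of M along Y, then U_k := ℰ ⊗_{O_X} V_k is a good V-filtration of ℰ ⊗_{O_X} M, and its Bernstein polynomial divides that of V_•. -/
open Polynomial TensorProduct

/-- A good `V`-filtration along `t = 0` (see the paper, §2: increasing, exhaustive,
`t·U k ⊆ U (k-1)`, `∂_t·U k ⊆ U (k+1)`, stabilizing on both sides). -/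
def IsGoodVFiltration {R E : Type*} [CommRing R] [AddCommGroup E] [Module R E]
    (t : R) (der : E →+ E) (U : ℤ → Submodule R E) : Prop :=
  Monotone U ∧
  (∀ k : ℤ, ∀ m ∈ U k, t • m ∈ U (k - 1)) ∧
  (∀ k : ℤ, ∀ m ∈ U k, der m ∈ U (k + 1)) ∧
  (∀ m : E, ∃ k : ℤ, m ∈ U k) ∧
  ∃ k₀ : ℤ, ∀ k : ℤ, k₀ ≤ k →
    U (k + 1) = Submodule.span R ((U k : Set E) ∪ ⇑der '' (U k)) ∧
    U (-(k + 1)) = Ideal.span {t} • U (-k)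

/-- `b` is a Bernstein polynomial for the `V`-filtration `U`: `b(θ + k)·U k ⊆ U (k-1)`
for all `k`, where `θ = t∂_t`. -/
def IsBernsteinPolyFor {R E : Type*} [CommRing R] [AddCommGroup E] [Module R E]
    [Module ℂ E] (θ : Module.End ℂ E) (U : ℤ → Submodule R E) (b : ℂ[X]) : Prop :=
  ∀ k : ℤ, ∀ m ∈ U k,
    (aeval (θ + (k : ℂ) • (1 : Module.End ℂ E))) b m ∈ U (k - 1)

/- **Statement 7.**  Local model: `R` the functions on `X`, `t` the equation of the
fiber `Y` with derivation `δ = ∂_t`, `E` an algebraic flat connection (finite free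
`R`-module with a Leibniz operator `derE`), `M` a (holonomic) `D_X`-module, i.e. an
`R`-module with a Leibniz operator `derM`, and `V` a good `V`-filtration of `M` along
`Y`.  Then `U k := ℰ ⊗_{O_X} V k` is a good `V`-filtration of `ℰ ⊗_{O_X} M` (with its
tensor-product connection `D(e ⊗ m) = ∂e ⊗ m + e ⊗ ∂m`), and every Bernstein
polynomial of `V` is a Bernstein polynomial of `U`; in particular the Bernstein
polynomial of `U` divides that of `V`. -/
theorem statement7 (R : Type*) [CommRing R] [Algebra ℂ R]
    (t : R) (δ : Derivation ℂ R R) (hδt : δ t = 1)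
    (E : Type*) [AddCommGroup E] [Module R E]
    [Module.Free R E] [Module.Finite R E]
    (derE : E →+ E)
    (hderE : ∀ (f : R) (m : E), derE (f • m) = δ f • m + f • derE m)
    (M : Type*) [AddCommGroup M] [Module R M] [Module ℂ M] [IsScalarTower ℂ R M]
    (derM : M →+ M)
    (hderM : ∀ (f : R) (m : M), derM (f • m) = δ f • m + f • derM m)
    (θM : Module.End ℂ M) (hθM : ∀ m : M, θM m = t • derM m)
    -- the tensor-product connection on `E ⊗[R] M`:
    [Module ℂ (E ⊗[R] M)] [IsScalarTower ℂ R (E ⊗[R] M)]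
    (D : E ⊗[R] M →+ E ⊗[R] M)
    (hD : ∀ (e : E) (m : M), D (e ⊗ₜ[R] m) = derE e ⊗ₜ[R] m + e ⊗ₜ[R] derM m)
    (θ : Module.End ℂ (E ⊗[R] M)) (hθ : ∀ x : E ⊗[R] M, θ x = t • D x)
    (V : ℤ → Submodule R M) (hV : IsGoodVFiltration t derM V)
    (U : ℤ → Submodule R (E ⊗[R] M))
    (hU : ∀ k : ℤ, U k =
      LinearMap.range (TensorProduct.map (LinearMap.id : E →ₗ[R] E) (V k).subtype)) :
    IsGoodVFiltration t D U ∧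
      ∀ b : ℂ[X], b.Monic → IsBernsteinPolyFor θM V b → IsBernsteinPolyFor θ U b := by
  obtain ⟨hVmono, hVt, hVd, hVex, k₀, hVstab⟩ := hV
  have hUmem : ∀ (j : ℤ) (e : E) (m : M), m ∈ V j → e ⊗ₜ[R] m ∈ U j := by
    intro j e m hm
    rw [hU]
    exact ⟨e ⊗ₜ[R] (⟨m, hm⟩ : V j), by simp⟩
  have hUind : ∀ (j : ℤ) (p : E ⊗[R] M → Prop), p 0 →
      (∀ (e : E) (m : M), m ∈ V j → p (e ⊗ₜ[R] m)) →
      (∀ x y, p x → p y → p (x + y)) → ∀ x ∈ U j, p x := by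
    intro j p h0 hgen hadd x hx
    rw [hU] at hx
    obtain ⟨y, rfl⟩ := hx
    induction y using TensorProduct.induction_on with
    | zero => simpa using h0
    | tmul e m => simpa using hgen e m.1 m.2
    | add a b ha hb => rw [map_add]; exact hadd _ _ ha hb
  have hUle : ∀ j j' : ℤ, j ≤ j' → U j ≤ U j' := by
    intro j j' h x hx
    exact hUind j (· ∈ U j') (Submodule.zero_mem _)
      (fun e m hm => hUmem j' e m (hVmono h hm))
      (fun a b ha hb => Submodule.add_mem _ ha hb) x hx
  have hUt : ∀ (j : ℤ) x, x ∈ U j → t • x ∈ U (j - 1) := by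
    intro j x hx
    refine hUind j (fun x => t • x ∈ U (j - 1)) (by simp) ?_ ?_ x hx
    · intro e m hm
      rw [← TensorProduct.tmul_smul]
      exact hUmem _ _ _ (hVt j m hm)
    · intro a b ha hb; rw [smul_add]; exact Submodule.add_mem _ ha hb
  have hUD : ∀ (j : ℤ) x, x ∈ U j → D x ∈ U (j + 1) := by
    intro j x hx
    refine hUind j (fun x => D x ∈ U (j + 1)) (by simp) ?_ ?_ x hx
    · intro e m hm
      rw [hD]
      exact Submodule.add_mem _ (hUmem _ _ _ (hVmono (by omega) hm))
        (hUmem _ _ _ (hVd j m hm))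
    · intro a b ha hb; rw [map_add]; exact Submodule.add_mem _ ha hb
  have hUθ : ∀ (j : ℤ) x, x ∈ U j → θ x ∈ U j := by
    intro j x hx
    rw [hθ]
    have h1 := hUt (j + 1) (D x) (hUD j x hx)
    rwa [add_sub_cancel_right] at h1
  have hUc : ∀ (c : ℂ) (j : ℤ) x, x ∈ U j → c • x ∈ U j := by
    intro c j x hx
    rw [← algebraMap_smul R c x]
    exact Submodule.smul_mem _ _ hx
  have hVc : ∀ (c : ℂ) (j : ℤ) m, m ∈ V j → c • m ∈ V j := by
    intro c j m hm
    rw [← algebraMap_smul R c m]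
    exact Submodule.smul_mem _ _ hm
  have hUex : ∀ x : E ⊗[R] M, ∃ j : ℤ, x ∈ U j := by
    intro x
    induction x using TensorProduct.induction_on with
    | zero => exact ⟨0, Submodule.zero_mem _⟩
    | tmul e m =>
      obtain ⟨j, hj⟩ := hVex m
      exact ⟨j, hUmem j e m hj⟩
    | add a b ha hb =>
      obtain ⟨j1, h1⟩ := ha
      obtain ⟨j2, h2⟩ := hb
      exact ⟨max j1 j2, Submodule.add_mem _ (hUle _ _ (le_max_left _ _) h1)
        (hUle _ _ (le_max_right _ _) h2)⟩
  have hctmul : ∀ (c : ℂ) (e : E) (m : M), e ⊗ₜ[R] (c • m) = c • (e ⊗ₜ[R] m) := by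
    intro c e m
    rw [← algebraMap_smul R c m, ← algebraMap_smul R c (e ⊗ₜ[R] m),
      TensorProduct.tmul_smul]
  refine ⟨⟨fun a b h => hUle a b h, fun j x hx => hUt j x hx,
      fun j x hx => hUD j x hx, hUex, k₀, ?_⟩, ?_⟩
  · intro k hk
    obtain ⟨hs1, hs2⟩ := hVstab k hk
    constructor
    · apply le_antisymm
      · intro x hx
        refine hUind (k + 1)
          (fun x => x ∈ Submodule.span R ((U k : Set (E ⊗[R] M)) ∪ ⇑D '' (U k)))
          (Submodule.zero_mem _) ?_ (fun a b ha hb => Submodule.add_mem _ ha hb) x hx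
        intro e m hm
        rw [hs1] at hm
        refine Submodule.span_induction
          (p := fun m _ => ∀ e : E, e ⊗ₜ[R] m ∈
            Submodule.span R ((U k : Set (E ⊗[R] M)) ∪ ⇑D '' (U k)))
          ?_ ?_ ?_ ?_ hm e
        · rintro m' (hm' | ⟨m'', hm'', rfl⟩) e'
          · exact Submodule.subset_span (Set.mem_union_left _ (hUmem k e' m' hm'))
          · have heq : e' ⊗ₜ[R] (derM m'') = D (e' ⊗ₜ[R] m'') - derE e' ⊗ₜ[R] m'' := by
              rw [hD]; abel
            rw [heq]
            refine Submodule.sub_mem _ ?_ ?_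
            · exact Submodule.subset_span (Set.mem_union_right _
                ⟨e' ⊗ₜ[R] m'', hUmem k e' m'' hm'', rfl⟩)
            · exact Submodule.subset_span (Set.mem_union_left _ (hUmem k _ _ hm''))
        · intro e'; simp
        · intro a b _ _ ha hb e'
          rw [TensorProduct.tmul_add]
          exact Submodule.add_mem _ (ha e') (hb e')
        · intro r a _ ha e'
          rw [TensorProduct.tmul_smul]
          exact Submodule.smul_mem _ r (ha e')
      · rw [Submodule.span_le]
        rintro x (hx | ⟨y, hy, rfl⟩)
        · exact hUle k (k + 1) (by omega) hx
        · exact hUD k y hy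
    · apply le_antisymm
      · intro x hx
        refine hUind (-(k + 1)) (fun x => x ∈ Ideal.span {t} • U (-k))
          (Submodule.zero_mem _) ?_ (fun a b ha hb => Submodule.add_mem _ ha hb) x hx
        intro e m hm
        rw [hs2] at hm
        refine Submodule.smul_induction_on (p := fun m => ∀ e : E,
            e ⊗ₜ[R] m ∈ Ideal.span {t} • U (-k)) hm ?_ ?_ e
        · intro r hr n hn e'
          rw [TensorProduct.tmul_smul]
          exact Submodule.smul_mem_smul hr (hUmem _ e' n hn)
        · intro a b ha hb e'
          rw [TensorProduct.tmul_add]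
          exact Submodule.add_mem _ (ha e') (hb e')
      · refine Submodule.smul_le.2 ?_
        intro r hr x hx
        obtain ⟨c, rfl⟩ := Ideal.mem_span_singleton'.1 hr
        have h1 := hUt (-k) x hx
        have h2 : -k - 1 = -(k + 1) := by ring
        rw [h2] at h1
        rw [mul_smul]
        exact Submodule.smul_mem _ c h1
  · intro b hb hbV k x hx
    set A : Module.End ℂ (E ⊗[R] M) := θ + (k : ℂ) • (1 : Module.End ℂ (E ⊗[R] M))
      with hAdef
    set AM : Module.End ℂ M := θM + (k : ℂ) • (1 : Module.End ℂ M) with hAMdef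
    have hθMV : ∀ (j : ℤ) m, m ∈ V j → θM m ∈ V j := by
      intro j m hm
      rw [hθM]
      have h1 := hVt (j + 1) (derM m) (hVd j m hm)
      rwa [add_sub_cancel_right] at h1
    have hAMV : ∀ m, m ∈ V k → AM m ∈ V k := by
      intro m hm
      have h1 : AM m = θM m + (k : ℂ) • m := by
        simp [hAMdef, LinearMap.add_apply]
      rw [h1]
      exact Submodule.add_mem _ (hθMV k m hm) (hVc _ _ _ hm)
    have hAU : ∀ (j : ℤ) x, x ∈ U j → A x ∈ U j := by
      intro j x hx
      have h1 : A x = θ x + (k : ℂ) • x := by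
        simp [hAdef, LinearMap.add_apply]
      rw [h1]
      exact Submodule.add_mem _ (hUθ j x hx) (hUc _ _ _ hx)
    have hAMnV : ∀ (n : ℕ) (m : M), m ∈ V k → (AM ^ n) m ∈ V k := by
      intro n
      induction n with
      | zero => intro m hm; simpa using hm
      | succ n ih =>
        intro m hm
        rw [pow_succ, Module.End.mul_apply]
        exact ih _ (hAMV m hm)
    have hkey1 : ∀ (e : E) (m : M), m ∈ V k →
        A (e ⊗ₜ[R] m) - e ⊗ₜ[R] (AM m) ∈ U (k - 1) := by
      intro e m hm
      have e1 : A (e ⊗ₜ[R] m) - e ⊗ₜ[R] (AM m) = t • (derE e ⊗ₜ[R] m) := by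
        have h1 : A (e ⊗ₜ[R] m) = θ (e ⊗ₜ[R] m) + (k : ℂ) • (e ⊗ₜ[R] m) := by
          simp [hAdef, LinearMap.add_apply]
        have h2 : AM m = θM m + (k : ℂ) • m := by
          simp [hAMdef, LinearMap.add_apply]
        rw [h1, h2, hθ, hD, hθM, smul_add, TensorProduct.tmul_add, hctmul,
          TensorProduct.tmul_smul]
        abel
      rw [e1]
      exact hUt k _ (hUmem k _ m hm)
    have hkeyn : ∀ (n : ℕ) (e : E) (m : M), m ∈ V k →
        (A ^ n) (e ⊗ₜ[R] m) - e ⊗ₜ[R] ((AM ^ n) m) ∈ U (k - 1) := by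
      intro n
      induction n with
      | zero => intro e m hm; simp
      | succ n ih =>
        intro e m hm
        have hu' : (A ^ n) (e ⊗ₜ[R] m) - e ⊗ₜ[R] ((AM ^ n) m) ∈ U (k - 1) := ih e m hm
        have key := hkey1 e ((AM ^ n) m) (hAMnV n m hm)
        have expand : (A ^ (n + 1)) (e ⊗ₜ[R] m) - e ⊗ₜ[R] ((AM ^ (n + 1)) m)
            = (A (e ⊗ₜ[R] ((AM ^ n) m)) - e ⊗ₜ[R] (AM ((AM ^ n) m)))
              + A ((A ^ n) (e ⊗ₜ[R] m) - e ⊗ₜ[R] ((AM ^ n) m)) := by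
          rw [pow_succ', pow_succ', Module.End.mul_apply, Module.End.mul_apply, map_sub]
          abel
        rw [expand]
        exact Submodule.add_mem _ key (hAU _ _ hu')
    have hkeyb : ∀ (p : ℂ[X]) (e : E) (m : M), m ∈ V k →
        (aeval A) p (e ⊗ₜ[R] m) - e ⊗ₜ[R] ((aeval AM) p m) ∈ U (k - 1) := by
      intro p
      induction p using Polynomial.induction_on' with
      | add p q hp hq =>
        intro e m hm
        have h1 := hp e m hm
        have h2 := hq e m hm
        have h3 := Submodule.add_mem _ h1 h2
        have e1 : (aeval A) (p + q) (e ⊗ₜ[R] m) - e ⊗ₜ[R] ((aeval AM) (p + q) m)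
            = ((aeval A) p (e ⊗ₜ[R] m) - e ⊗ₜ[R] ((aeval AM) p m))
              + ((aeval A) q (e ⊗ₜ[R] m) - e ⊗ₜ[R] ((aeval AM) q m)) := by
          rw [map_add, map_add, LinearMap.add_apply, LinearMap.add_apply,
            TensorProduct.tmul_add]
          abel
        rw [e1]
        exact h3
      | monomial n c =>
        intro e m hm
        have e1 : (aeval A) (monomial n c) (e ⊗ₜ[R] m)
            - e ⊗ₜ[R] ((aeval AM) (monomial n c) m)
            = c • ((A ^ n) (e ⊗ₜ[R] m) - e ⊗ₜ[R] ((AM ^ n) m)) := by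
          rw [aeval_monomial, aeval_monomial, Module.End.mul_apply, Module.End.mul_apply,
            Module.algebraMap_end_apply, Module.algebraMap_end_apply, hctmul, smul_sub]
        rw [e1]
        exact hUc c _ _ (hkeyn n e m hm)
    refine hUind k (fun x => (aeval A) b x ∈ U (k - 1)) (by simp) ?_ ?_ x hx
    · intro e m hm
      have h1 := hkeyb b e m hm
      have h2 : e ⊗ₜ[R] ((aeval AM) b m) ∈ U (k - 1) := hUmem _ _ _ (hbV k m hm)
      have h3 := Submodule.add_mem _ h1 h2
      simpa using h3
    · intro a b' ha hb'
      rw [map_add]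
      exact Submodule.add_mem _ ha hb'
end

section
/- Let f : Y → X be a morphism of locally noetherian schemes with a section g : X → Y, and D ⊆ X a closed subscheme that is a Cartier divisor, with i : D → X the inclusion. Assume g is a regular immersion. Then the exceptional divisor E_[D] of the blow-up of Y along g(D) intersected with the dilatation Y_(D) is canonically isomorphic to the vector bundle V((g∘i)*Ω¹_{Y/X} ⊗ O_D(D)) over D. -/
/-!
Write `α` for the image of `a` in `B` and `x = (b₁, …, b_r, α)`. As `g` is a section,
`B ⧸ ker g ≅ A`, so `α` is a nonzerodivisor modulo `(b)` and `x` is a regular sequence generating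
`J`. Regular sequences are quasi-regular: a form `F` of degree `d` with `F(x) ∈ J^(d+1)` has all its
coefficients in `J`.

The dilatation `B[J/α]` is generated by the `bᵢ/α`, so `B[T₁, …, T_r] → B[J/α]/(α)` is onto.
If `P` lies in its kernel, homogenize `P` with respect to `α` to a form `F` of degree `d`; then
`α^n F(x) ∈ J^(n+d+1)` for some `n`, and quasi-regularity gives first `F(x) ∈ J^(d+1)` and then
that the coefficients of `P` lie in `J`. Hence `B[J/α]/(α) ≅ (B/J)[T] ≅ (A/a)[T]`.
-/

open MvPolynomial

section QuasiRegular

variable {R : Type*} [CommRing R]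

namespace MvPolynomial

variable {σ τ : Type*}

lemma algHom_mem_map_C (φ : MvPolynomial σ R →ₐ[R] MvPolynomial τ R) {I : Ideal R}
    {F : MvPolynomial σ R} (hF : F ∈ I.map C) : φ F ∈ I.map C := by
  have := Ideal.mem_map_of_mem (φ : MvPolynomial σ R →+* MvPolynomial τ R) hF
  rwa [Ideal.map_map, show (φ : MvPolynomial σ R →+* MvPolynomial τ R).comp C = C from
    φ.comp_algebraMap] at this

lemma IsHomogeneous.eval_mem_pow_succ_of_mem_map_C {x : σ → R} {d : ℕ} {F : MvPolynomial σ R}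
    (hF : F.IsHomogeneous d) (hFI : F ∈ (Ideal.span (Set.range x)).map C) :
    eval x F ∈ Ideal.span (Set.range x) ^ (d + 1) := by
  rw [F.as_sum, map_sum, pow_succ']
  refine Ideal.sum_mem _ fun m hm => ?_
  rw [eval_monomial]
  refine Ideal.mul_mem_mul (mem_map_C_iff.mp hFI m) ?_
  have hm : m.degree = d := by
    rw [Finsupp.degree_eq_weight_one]
    exact hF (mem_support_iff.mp hm)
  simpa [eval_monomial] using (Ideal.mem_span_pow_iff_exists_isHomogeneous x _).mpr
    ⟨monomial m 1, isHomogeneous_monomial _ hm, rfl⟩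

lemma IsHomogeneous.of_X_mul {H : MvPolynomial σ R} {i : σ} {d : ℕ}
    (h : (X i * H).IsHomogeneous (d + 1)) : H.IsHomogeneous d := by
  intro m hm
  have := h (show coeff (m + Finsupp.single i 1) (X i * H) ≠ 0 by rwa [add_comm, coeff_X_mul])
  simpa [Finsupp.weight_single] using this

lemma IsHomogeneous.aeval_smul {S : Type*} [CommRing S] [Algebra R S] {φ : MvPolynomial σ R}
    {n : ℕ} (hφ : φ.IsHomogeneous n) (c : S) (y : σ → S) :
    MvPolynomial.aeval (c • y) φ = c ^ n * MvPolynomial.aeval y φ := by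
  rw [aeval_def, aeval_def, eval₂_eq, eval₂_eq, Finset.mul_sum]
  refine Finset.sum_congr rfl fun m hm => ?_
  have hm : ∑ i ∈ m.support, m i = n := by
    rw [← Finsupp.degree_apply, Finsupp.degree_eq_weight_one]
    exact hφ (mem_support_iff.mp hm)
  simp only [Pi.smul_apply, smul_eq_mul, mul_pow, Finset.prod_mul_distrib,
    Finset.prod_pow_eq_pow_sum, hm]
  ring

lemma algebraMap_eval {S : Type*} [CommRing S] [Algebra R S] (x : σ → R)
    (P : MvPolynomial σ R) : algebraMap R S (eval x P) = aeval (fun i => algebraMap R S (x i)) P :=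
  comp_aeval_apply x (Algebra.ofId R S) P

lemma finSuccEquiv_rename_succ {k : ℕ} (g : MvPolynomial (Fin k) R) :
    finSuccEquiv R k (rename Fin.succ g) = Polynomial.C g := by
  induction g using MvPolynomial.induction_on with
  | C a => simp [finSuccEquiv_apply]
  | add p q hp hq => simp [hp, hq]
  | mul_X p i hp => simp [hp, finSuccEquiv_X_succ]

lemma IsHomogeneous.exists_eq_rename_succ_add_X_zero_mul {k d : ℕ}
    {F : MvPolynomial (Fin (k + 1)) R} (hF : F.IsHomogeneous (d + 1)) :
    ∃ (g : MvPolynomial (Fin k) R) (H : MvPolynomial (Fin (k + 1)) R),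
      g.IsHomogeneous (d + 1) ∧ H.IsHomogeneous d ∧ F = rename Fin.succ g + X 0 * H := by
  set p := finSuccEquiv R k F
  have hg : (p.coeff 0).IsHomogeneous (d + 1) :=
    finSuccEquiv_coeff_isHomogeneous hF 0 (d + 1) (zero_add _)
  have hF' : F = rename Fin.succ (p.coeff 0) + X 0 * (finSuccEquiv R k).symm p.divX := by
    apply (finSuccEquiv R k).injective
    rw [map_add, map_mul, finSuccEquiv_X_zero, AlgEquiv.apply_symm_apply, finSuccEquiv_rename_succ]
    exact (Polynomial.X_mul_divX_add p).symm.trans (add_comm _ _)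
  refine ⟨_, _, hg, IsHomogeneous.of_X_mul (i := 0) ?_, hF'⟩
  rw [eq_sub_of_add_eq' hF'.symm]
  exact hF.sub hg.rename_isHomogeneous

lemma exists_isHomogeneous_bind₁_snoc_X_one_eq {r : ℕ} (P : MvPolynomial (Fin r) R) :
    ∃ F : MvPolynomial (Fin (r + 1)) R, F.IsHomogeneous P.totalDegree ∧
      bind₁ (Fin.snoc X 1 : Fin (r + 1) → MvPolynomial (Fin r) R) F = P := by
  set d := P.totalDegree
  refine ⟨∑ k ∈ Finset.range (d + 1),
    rename Fin.castSucc (homogeneousComponent k P) * X (Fin.last r) ^ (d - k), ?_, ?_⟩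
  · refine IsHomogeneous.sum _ _ _ fun k hk => ?_
    have hk : k + (d - k) = d := Nat.add_sub_cancel' (Nat.lt_succ_iff.mp (Finset.mem_range.mp hk))
    have := (homogeneousComponent_isHomogeneous k P).rename_isHomogeneous (f := Fin.castSucc).mul
      (isHomogeneous_X_pow (Fin.last r) (d - k))
    rwa [hk] at this
  · simp [bind₁_rename, Function.comp_def, sum_homogeneousComponent, d]

end MvPolynomial

lemma Ideal.ofList_ofFn {k : ℕ} (b : Fin k → R) : ofList (List.ofFn b) = span (Set.range b) := by
  simp [ofList, Set.range]

namespace RingTheory.Sequence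

open Ideal

variable {σ τ : Type*}

/-- Quasi-regularity in the sense of Matsumura, §16: with `I = (x)`, the map
`(R ⧸ I)[X] → gr_I R` sending `Xᵢ` to the class of `xᵢ` in `I ⧸ I²` is injective. -/
def IsQuasiRegular (x : σ → R) : Prop :=
  ∀ (d : ℕ) (F : MvPolynomial σ R), F.IsHomogeneous d →
    eval x F ∈ span (Set.range x) ^ (d + 1) → F ∈ (span (Set.range x)).map C

lemma isQuasiRegular_of_isEmpty [IsEmpty σ] (x : σ → R) : IsQuasiRegular x := by
  intro d F _ hFx
  rw [Set.range_eq_empty, span_empty, ← zero_eq_bot, zero_pow d.succ_ne_zero, zero_eq_bot,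
    mem_bot, Subsingleton.elim x 0, eval_zero, constantCoeff_eq] at hFx
  refine MvPolynomial.mem_map_C_iff.mpr fun m => ?_
  rw [Subsingleton.elim m 0, hFx]
  exact zero_mem _

lemma IsQuasiRegular.comp_equiv {x : σ → R} (hx : IsQuasiRegular x) (e : τ ≃ σ) :
    IsQuasiRegular (x ∘ e) := by
  intro d F hF hFx
  rw [e.surjective.range_comp, ← eval_rename] at hFx
  rw [e.surjective.range_comp]
  have := algHom_mem_map_C (rename e.symm) (hx d _ hF.rename_isHomogeneous hFx)
  rwa [rename_rename, e.symm_comp_self, rename_id_apply] at this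

variable {x : σ → R}

/-- Write `F(x) = ∑ xᵢ Lᵢ(x)` with `Lᵢ` of degree `d`; then `F - ∑ C(xᵢ) Lᵢ` vanishes at `x` and
differs from `F` by a polynomial with coefficients in `I = (x)`. -/
lemma mem_map_C_of_eval_mem_pow_succ {d : ℕ}
    (h : ∀ F : MvPolynomial σ R, F.IsHomogeneous d → eval x F = 0 →
      F ∈ (span (Set.range x)).map C)
    {F : MvPolynomial σ R} (hF : F.IsHomogeneous d)
    (hFx : eval x F ∈ span (Set.range x) ^ (d + 1)) : F ∈ (span (Set.range x)).map C := by
  rw [pow_succ, ← smul_eq_mul] at hFx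
  obtain ⟨c, hc, hsum⟩ := (Submodule.mem_ideal_smul_span_iff_exists_sum _ x _).mp hFx
  choose L hL hLx using fun i => (mem_span_pow_iff_exists_isHomogeneous x (c i)).mp (hc i)
  have hC : ∀ i, C (x i) ∈ (span (Set.range x)).map (C : R →+* MvPolynomial σ R) := fun i =>
    mem_map_of_mem _ (subset_span (Set.mem_range_self i))
  have key := h (F - c.sum fun i _ => C (x i) * L i)
    (hF.sub (IsHomogeneous.sum _ _ _ fun i _ => (hL i).C_mul _))
    (by simp [Finsupp.sum, hLx, ← hsum, mul_comm])
  rw [← sub_add_cancel F (c.sum fun i _ => C (x i) * L i)]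
  exact add_mem key (sum_mem fun i _ => mul_mem_right _ _ (hC i))

lemma IsQuasiRegular.mem_pow_of_mul_mem_pow (hx : IsQuasiRegular x) {t : R}
    (ht : IsSMulRegular (R ⧸ span (Set.range x)) t) :
    ∀ (e : ℕ) {z : R}, z * t ∈ span (Set.range x) ^ e → z ∈ span (Set.range x) ^ e
  | 0, _, _ => by simp
  | e + 1, z, hz => by
    obtain ⟨F, hF, rfl⟩ := (mem_span_pow_iff_exists_isHomogeneous x z).mp
      (hx.mem_pow_of_mul_mem_pow ht e (pow_le_pow_right e.le_succ hz))
    have htF := hx e (C t * F) (hF.C_mul t) (by simpa [mul_comm] using hz)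
    refine hF.eval_mem_pow_succ_of_mem_map_C (MvPolynomial.mem_map_C_iff.mpr fun m => ?_)
    refine (isSMulRegular_quotient_iff_mem_of_smul_mem _ t).mp ht _ ?_
    simpa using MvPolynomial.mem_map_C_iff.mp htF m

lemma IsQuasiRegular.mem_pow_succ_of_pow_mul_mem (hx : IsQuasiRegular x) (i : σ) {m : ℕ} :
    ∀ (e : ℕ) {z : R}, x i ^ m * z ∈ span (Set.range x) ^ (m + e + 1) →
      z ∈ span (Set.range x) ^ (e + 1) := by
  have step : ∀ {e : ℕ} {z : R}, z ∈ span (Set.range x) ^ e →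
      x i ^ m * z ∈ span (Set.range x) ^ (m + e + 1) → z ∈ span (Set.range x) ^ (e + 1) := by
    intro e z hz hmz
    obtain ⟨F, hF, rfl⟩ := (mem_span_pow_iff_exists_isHomogeneous x z).mp hz
    have hmF := hx (m + e) (monomial (Finsupp.single i m) 1 * F)
      ((isHomogeneous_monomial _ (by simp)).mul hF)
      (by simpa [eval_monomial, Finsupp.prod_single_index] using hmz)
    refine hF.eval_mem_pow_succ_of_mem_map_C (MvPolynomial.mem_map_C_iff.mpr fun n => ?_)
    simpa [coeff_monomial_mul] using MvPolynomial.mem_map_C_iff.mp hmF (Finsupp.single i m + n)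
  intro e
  induction e with
  | zero => exact fun hz => step (by simp) hz
  | succ e ih => exact fun hz => step (ih (pow_le_pow_right (by omega) hz)) hz

/-- Matsumura, Theorem 16.2. Write a form of degree `d + 1` vanishing at `x = (t, b)` as
`g + X₀ H`. As `t` is regular modulo every power of `(b)`, `H(x) t = -g(b)` puts `H(x)` in
`(b)^(d+1)`; so `H` is handled by induction on the degree, and then `g` by quasi-regularity of `b`.
-/
theorem IsQuasiRegular.cons {k : ℕ} {b : Fin k → R} (hb : IsQuasiRegular b) {t : R}
    (ht : IsSMulRegular (R ⧸ span (Set.range b)) t) :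
    IsQuasiRegular (Fin.cons t b : Fin (k + 1) → R) := by
  set x : Fin (k + 1) → R := Fin.cons t b
  have hbx : span (Set.range b) ≤ span (Set.range x) :=
    span_mono (by rw [Fin.range_cons]; exact Set.subset_insert _ _)
  have htx : C t ∈ (span (Set.range x)).map (C : R →+* MvPolynomial (Fin k) R) :=
    mem_map_of_mem _ (subset_span ⟨0, rfl⟩)
  intro d
  induction d using Nat.strong_induction_on with | _ d ih =>
  refine fun F hF => mem_map_C_of_eval_mem_pow_succ (fun F hF hF0 => ?_) hF
  cases d with
  | zero =>
    rw [← totalDegree_zero_iff_isHomogeneous, totalDegree_eq_zero_iff_eq_C] at hF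
    rw [hF, eval_C] at hF0
    rw [hF, hF0, C_0]
    exact zero_mem _
  | succ d =>
    obtain ⟨g, H, hg, hH, rfl⟩ := hF.exists_eq_rename_succ_add_X_zero_mul
    replace hF0 : eval b g + t * eval x H = 0 := by simpa [eval_rename, x] using hF0
    have hHb : eval x H ∈ span (Set.range b) ^ (d + 1) := by
      refine hb.mem_pow_of_mul_mem_pow ht _ ?_
      rw [mul_comm, eq_neg_of_add_eq_zero_right hF0]
      exact neg_mem ((mem_span_pow_iff_exists_isHomogeneous _ _).mpr ⟨g, hg, rfl⟩)
    have hHx : H ∈ (span (Set.range x)).map C :=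
      ih d d.lt_succ_self H hH (pow_right_mono hbx _ hHb)
    obtain ⟨H', hH', hH'b⟩ := (mem_span_pow_iff_exists_isHomogeneous b _).mp hHb
    have hgH' : g + C t * H' ∈ (span (Set.range b)).map C :=
      hb (d + 1) _ (hg.add (hH'.C_mul t)) (by simp [hH'b, hF0])
    have hgx : g ∈ (span (Set.range x)).map C := by
      rw [← add_sub_cancel_right g (C t * H')]
      exact sub_mem (map_mono hbx hgH') (mul_mem_right _ _ htx)
    exact add_mem (algHom_mem_map_C _ hgx) (mul_mem_left _ _ hHx)

theorem IsQuasiRegular.snoc {k : ℕ} {b : Fin k → R} (hb : IsQuasiRegular b) {t : R}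
    (ht : IsSMulRegular (R ⧸ span (Set.range b)) t) :
    IsQuasiRegular (Fin.snoc b t : Fin (k + 1) → R) := by
  have h := (hb.comp_equiv Fin.revPerm).cons (t := t) (by rwa [Fin.revPerm.surjective.range_comp])
  convert h.comp_equiv Fin.revPerm using 1
  funext i
  induction i using Fin.lastCases with
  | last => simp
  | cast j => simp [Fin.rev_castSucc]

lemma isWeaklyRegular_ofFn_snoc_iff {k : ℕ} (b : Fin k → R) (t : R) :
    IsWeaklyRegular R (List.ofFn (Fin.snoc b t : Fin (k + 1) → R)) ↔
      IsWeaklyRegular R (List.ofFn b) ∧ IsSMulRegular (R ⧸ span (Set.range b)) t := by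
  simp only [List.ofFn_succ', Fin.snoc_castSucc, Fin.snoc_last, List.concat_eq_append]
  rw [isWeaklyRegular_append_iff, isWeaklyRegular_singleton_iff, ofList_ofFn, smul_eq_mul,
    mul_top]

theorem isQuasiRegular_of_isWeaklyRegular_ofFn :
    ∀ {k : ℕ} (x : Fin k → R), IsWeaklyRegular R (List.ofFn x) → IsQuasiRegular x
  | 0, x, _ => isQuasiRegular_of_isEmpty x
  | k + 1, x, h => by
    rw [← Fin.snoc_init_self x, isWeaklyRegular_ofFn_snoc_iff] at h
    rw [← Fin.snoc_init_self x]
    exact (isQuasiRegular_of_isWeaklyRegular_ofFn _ h.1).snoc h.2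

end RingTheory.Sequence

end QuasiRegular

section Dilatation

open IsLocalization.Away RingTheory.Sequence

variable {B : Type*} [CommRing B]

noncomputable def dilatation (J : Ideal B) (α : B) : Subalgebra B (Localization.Away α) :=
  Algebra.adjoin B ((fun j => algebraMap B (Localization.Away α) j * invSelf α) '' J)

lemma algebraMap_pow_mul_invSelf_pow (α : B) (n : ℕ) :
    algebraMap B (Localization.Away α) α ^ n * invSelf α ^ n = 1 := by
  rw [← mul_pow, mul_invSelf, one_pow]

variable {r : ℕ} {J : Ideal B} {b : Fin r → B}

lemma pow_mul_eq_pow_mul_of_invSelf_pow_mul_eq {α : B} (hα : α ∈ nonZeroDivisors B) {y z : B}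
    {m n : ℕ} (h : invSelf α ^ m * algebraMap B (Localization.Away α) y =
      invSelf α ^ n * algebraMap B (Localization.Away α) z) :
    α ^ n * y = α ^ m * z := by
  apply IsLocalization.injective (Localization.Away α) (Submonoid.powers_le.mpr hα)
  rw [map_mul, map_mul, map_pow, map_pow]
  linear_combination algebraMap B (Localization.Away α) α ^ (m + n) * h
    - algebraMap B _ α ^ n * algebraMap B _ y * algebraMap_pow_mul_invSelf_pow α m
    + algebraMap B _ α ^ m * algebraMap B _ z * algebraMap_pow_mul_invSelf_pow α n

lemma exists_eq_mul_invSelf_pow_of_mem_dilatation {α : B} (hαJ : α ∈ J) {q : Localization.Away α}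
    (hq : q ∈ dilatation J α) : ∃ n, ∃ c ∈ J ^ n, q = algebraMap B _ c * invSelf α ^ n := by
  induction hq using Algebra.adjoin_induction with
  | mem y hy =>
    obtain ⟨j, hj, rfl⟩ := hy
    exact ⟨1, j, by simpa using hj, by simp⟩
  | algebraMap w => exact ⟨0, w, by simp, by simp⟩
  | add y z _ _ hy hz =>
    obtain ⟨n₁, c₁, hc₁, rfl⟩ := hy
    obtain ⟨n₂, c₂, hc₂, rfl⟩ := hz
    refine ⟨n₁ + n₂, c₁ * α ^ n₂ + c₂ * α ^ n₁, ?_, ?_⟩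
    · rw [pow_add]
      refine add_mem (Ideal.mul_mem_mul hc₁ (Ideal.pow_mem_pow hαJ _)) ?_
      rw [mul_comm (J ^ n₁)]
      exact Ideal.mul_mem_mul hc₂ (Ideal.pow_mem_pow hαJ _)
    · simp only [map_add, map_mul, map_pow, pow_add]
      linear_combination (-(algebraMap B _ c₁ * invSelf α ^ n₁)) *
          algebraMap_pow_mul_invSelf_pow α n₂ +
        (-(algebraMap B _ c₂ * invSelf α ^ n₂)) * algebraMap_pow_mul_invSelf_pow α n₁
  | mul y z _ _ hy hz =>
    obtain ⟨n₁, c₁, hc₁, rfl⟩ := hy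
    obtain ⟨n₂, c₂, hc₂, rfl⟩ := hz
    refine ⟨n₁ + n₂, c₁ * c₂, by rw [pow_add]; exact Ideal.mul_mem_mul hc₁ hc₂, ?_⟩
    rw [map_mul, pow_add]
    ring

lemma algebraMap_mem_span_singleton_of_mem {α j : B} (hj : j ∈ J) :
    algebraMap B (dilatation J α) j ∈ Ideal.span {algebraMap B (dilatation J α) α} := by
  refine Ideal.mem_span_singleton'.mpr ⟨⟨_, Algebra.subset_adjoin ⟨j, hj, rfl⟩⟩, Subtype.ext ?_⟩
  simp only [Subalgebra.coe_mul, Subalgebra.coe_algebraMap]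
  rw [mul_right_comm, mul_assoc, mul_invSelf, mul_one]

noncomputable def dilatationPresentation (hb : ∀ i, b i ∈ J) (α : B) :
    MvPolynomial (Fin r) B →ₐ[B] dilatation J α :=
  aeval fun i => ⟨algebraMap B _ (b i) * invSelf α, Algebra.subset_adjoin ⟨b i, hb i, rfl⟩⟩

lemma coe_dilatationPresentation (hb : ∀ i, b i ∈ J) (α : B) (P : MvPolynomial (Fin r) B) :
    (dilatationPresentation hb α P : Localization.Away α) =
      aeval (fun i => algebraMap B _ (b i) * invSelf α) P := by
  rw [← Subalgebra.coe_val, ← AlgHom.comp_apply, dilatationPresentation, comp_aeval]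
  rfl

lemma dilatationPresentation_surjective {α : B}
    (hJ : J = Ideal.span (Set.range (Fin.snoc b α : Fin (r + 1) → B))) (hb : ∀ i, b i ∈ J) :
    Function.Surjective (dilatationPresentation hb α) := by
  intro q
  obtain ⟨P, hP⟩ : (q : Localization.Away α) ∈
      ((Subalgebra.val _).comp (dilatationPresentation hb α)).range := by
    refine Algebra.adjoin_le ?_ q.2
    rintro _ ⟨j, hj, rfl⟩
    dsimp only
    rw [SetLike.mem_coe, hJ] at hj
    induction hj using Submodule.span_induction with
    | mem y hy =>
      obtain ⟨i, rfl⟩ := hy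
      induction i using Fin.lastCases with
      | last =>
        rw [Fin.snoc_last, mul_invSelf]
        exact one_mem _
      | cast i => exact ⟨X i, by simp [dilatationPresentation]⟩
    | zero =>
      rw [map_zero, zero_mul]
      exact zero_mem _
    | add y z _ _ hy hz =>
      rw [map_add, add_mul]
      exact add_mem hy hz
    | smul c y _ hy =>
      rw [smul_eq_mul, map_mul, mul_assoc, ← Algebra.smul_def]
      exact Subalgebra.smul_mem _ hy c
  exact ⟨P, Subtype.ext hP⟩

lemma coe_dilatationPresentation_bind₁_snoc (hb : ∀ i, b i ∈ J) (α : B) {d : ℕ}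
    {F : MvPolynomial (Fin (r + 1)) B} (hF : F.IsHomogeneous d) :
    (dilatationPresentation hb α (bind₁ (Fin.snoc X 1 : Fin (r + 1) → _) F) :
        Localization.Away α) =
      invSelf α ^ d * algebraMap B _ (eval (Fin.snoc b α) F) := by
  have hsnoc : (fun i => aeval (fun i => algebraMap B (Localization.Away α) (b i) * invSelf α)
      ((Fin.snoc X 1 : Fin (r + 1) → MvPolynomial (Fin r) B) i)) =
      invSelf (S := Localization.Away α) α • fun i =>
        algebraMap B (Localization.Away α) ((Fin.snoc b α : Fin (r + 1) → B) i) := by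
    funext i
    induction i using Fin.lastCases with
    | last => simp [mul_comm (invSelf α), mul_invSelf]
    | cast i => simp [mul_comm]
  rw [coe_dilatationPresentation, aeval_bind₁, hsnoc, hF.aeval_smul, algebraMap_eval]

lemma mem_map_C_of_dilatationPresentation_mem_span {α : B}
    (hJ : J = Ideal.span (Set.range (Fin.snoc b α : Fin (r + 1) → B))) (hb : ∀ i, b i ∈ J)
    (hα : α ∈ nonZeroDivisors B) (hx : IsQuasiRegular (Fin.snoc b α : Fin (r + 1) → B))
    {P : MvPolynomial (Fin r) B}
    (hP : dilatationPresentation hb α P ∈ Ideal.span {algebraMap B (dilatation J α) α}) :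
    P ∈ J.map C := by
  have hαJ : α ∈ J := hJ ▸ Ideal.subset_span ⟨Fin.last r, Fin.snoc_last ..⟩
  obtain ⟨F, hF, hFP⟩ := exists_isHomogeneous_bind₁_snoc_X_one_eq P
  set d := P.totalDegree
  rw [← hFP] at hP ⊢
  refine algHom_mem_map_C _ (hJ ▸ hx d F hF ?_)
  obtain ⟨w, hw⟩ := Ideal.mem_span_singleton'.mp hP
  obtain ⟨n, c, hc, hwc⟩ := exists_eq_mul_invSelf_pow_of_mem_dilatation hαJ w.2
  have hFc : α ^ n * eval (Fin.snoc b α) F = α ^ d * (c * α) := by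
    refine pow_mul_eq_pow_mul_of_invSelf_pow_mul_eq hα ?_
    rw [← coe_dilatationPresentation_bind₁_snoc hb α hF, ← hw]
    simp [hwc, mul_comm, mul_left_comm]
  refine hx.mem_pow_succ_of_pow_mul_mem (Fin.last r) (m := n) d ?_
  rw [Fin.snoc_last, hFc, add_assoc, pow_add, mul_left_comm, ← pow_succ, ← hJ]
  exact Ideal.mul_mem_mul hc (Ideal.pow_mem_pow hαJ _)

lemma ker_dilatationPresentation {α : B}
    (hJ : J = Ideal.span (Set.range (Fin.snoc b α : Fin (r + 1) → B))) (hb : ∀ i, b i ∈ J)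
    (hα : α ∈ nonZeroDivisors B) (hx : IsQuasiRegular (Fin.snoc b α : Fin (r + 1) → B)) :
    RingHom.ker ((Ideal.Quotient.mk (Ideal.span {algebraMap B (dilatation J α) α})).comp
      (dilatationPresentation hb α).toRingHom) = J.map C := by
  refine le_antisymm (fun P hP => mem_map_C_of_dilatationPresentation_mem_span hJ hb hα hx
    (Ideal.Quotient.eq_zero_iff_mem.mp hP)) ?_
  rw [Ideal.map_le_iff_le_comap]
  intro j hj
  rw [Ideal.mem_comap, RingHom.mem_ker, RingHom.comp_apply, Ideal.Quotient.eq_zero_iff_mem]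
  simpa [dilatationPresentation] using algebraMap_mem_span_singleton_of_mem hj

noncomputable def dilatationQuotientEquiv {α : B}
    (hJ : J = Ideal.span (Set.range (Fin.snoc b α : Fin (r + 1) → B)))
    (hα : α ∈ nonZeroDivisors B) (hx : IsQuasiRegular (Fin.snoc b α : Fin (r + 1) → B)) :
    (dilatation J α ⧸ Ideal.span {algebraMap B (dilatation J α) α}) ≃+*
      MvPolynomial (Fin r) (B ⧸ J) :=
  have hb : ∀ i, b i ∈ J := fun i => hJ ▸ Ideal.subset_span ⟨i.castSucc, Fin.snoc_castSucc ..⟩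
  ((Ideal.quotEquivOfEq (ker_dilatationPresentation hJ hb hα hx).symm).trans
    (RingHom.quotientKerEquivOfSurjective
      (Ideal.Quotient.mk_surjective.comp (dilatationPresentation_surjective hJ hb)))).symm.trans
    (quotientEquivQuotientMvPolynomial J).toRingEquiv.symm

end Dilatation

section Retraction

variable {A B : Type*} [CommRing A] [CommRing B]

lemma isSMulRegular_quotient_ker (f : B →+* A) {t : B} (ht : f t ∈ nonZeroDivisors A) :
    IsSMulRegular (B ⧸ RingHom.ker f) t := by
  refine (isSMulRegular_quotient_iff_mem_of_smul_mem _ t).mpr fun z hz => ?_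
  rw [smul_eq_mul, RingHom.mem_ker, map_mul, mul_comm] at hz
  exact mem_nonZeroDivisors_iff_right.mp ht _ hz

variable [Algebra A B]

lemma ker_quotientMk_comp_eq_ker_sup_span (g : B →ₐ[A] A) (a : A) :
    RingHom.ker ((Ideal.Quotient.mk (Ideal.span {a})).comp (g : B →+* A)) =
      RingHom.ker g ⊔ Ideal.span {algebraMap A B a} := by
  have hg : Function.Surjective g := fun y => ⟨algebraMap A B y, g.commutes y⟩
  have ha : Ideal.span {a} = (Ideal.span {algebraMap A B a}).map (g : B →+* A) := by
    simp [Ideal.map_span]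
  rw [← RingHom.comap_ker, Ideal.mk_ker, ha, Ideal.comap_map_of_surjective (g : B →+* A) hg,
    sup_comm, ← RingHom.ker_eq_comap_bot]
  rfl

noncomputable def quotientKerSupSpanEquiv (g : B →ₐ[A] A) (a : A) :
    (B ⧸ (RingHom.ker g ⊔ Ideal.span {algebraMap A B a})) ≃+* A ⧸ Ideal.span {a} :=
  (Ideal.quotEquivOfEq (ker_quotientMk_comp_eq_ker_sup_span g a).symm).trans
    (RingHom.quotientKerEquivOfSurjective
      (Ideal.Quotient.mk_surjective.comp fun y => ⟨algebraMap A B y, g.commutes y⟩))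

end Retraction

theorem statement11 (A B : Type*) [CommRing A] [CommRing B] [Algebra A B]
    (g : B →ₐ[A] A) (a : A)
    (haA : a ∈ nonZeroDivisors A) (ha : algebraMap A B a ∈ nonZeroDivisors B)
    -- `g` is a regular immersion:
    (r : ℕ) (b : Fin r → B)
    (hgen : RingHom.ker g = Ideal.span (Set.range b))
    (hreg : RingTheory.Sequence.IsRegular B (List.ofFn b))
    (J : Ideal B) (hJ : J = RingHom.ker g ⊔ Ideal.span {algebraMap A B a})
    (Dil : Subalgebra B (Localization.Away (algebraMap A B a)))
    (hDil : Dil = Algebra.adjoin B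
      ((fun j => algebraMap B (Localization.Away (algebraMap A B a)) j *
        IsLocalization.Away.invSelf (S := Localization.Away (algebraMap A B a))
          (algebraMap A B a)) '' J)) :
    Nonempty
      ((Dil ⧸ Ideal.span {algebraMap B Dil (algebraMap A B a)}) ≃+*
        MvPolynomial (Fin r) (A ⧸ Ideal.span {a})) := by
  subst hDil
  have hJx : J = Ideal.span (Set.range (Fin.snoc b (algebraMap A B a) : Fin (r + 1) → B)) := by
    rw [hJ, Fin.range_snoc, Ideal.span_insert, hgen, sup_comm]
  have hαreg : IsSMulRegular (B ⧸ Ideal.span (Set.range b)) (algebraMap A B a) :=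
    hgen ▸ isSMulRegular_quotient_ker (g : B →+* A) (by simpa using haA)
  have hx := RingTheory.Sequence.isQuasiRegular_of_isWeaklyRegular_ofFn _
    ((RingTheory.Sequence.isWeaklyRegular_ofFn_snoc_iff b _).mpr
      ⟨hreg.toIsWeaklyRegular, hαreg⟩)
  exact ⟨(dilatationQuotientEquiv hJx ha hx).trans
    (MvPolynomial.mapEquiv _ ((Ideal.quotEquivOfEq hJ).trans (quotientKerSupSpanEquiv g a)))⟩
end
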